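/- arXiv:1301.2170 — 7 statements merged into one kernel-verified Lean document; each statement's English description precedes it below -/
import Mathlib

section
/- Let p(a₁,a₂|x₁,x₂) be any non-signalling bipartite conditional probability distribution (nonnegative, normalized, non-signalling), with outcomes aₖ ∈ Fin Aₖ and inputs xₖ ∈ Fin Xₖ, where Aₖ ≥ 1, Xₖ ≥ 1. Define hidden-variable sets Λₖ = Fin Aₖ × Fin Xₖ, and set q((a₁',x₁'),(a₂',x₂')) = p(a₁',a₂'|x₁',x₂')/(X₁·X₂), and p̃ₖ(aₖ|xₖ,(a',x')) = Xₖ·δ_{(a',x'),(aₖ,xₖ)} if aₖ < Aₖ-1, and p̃ₖ(aₖ|xₖ,(a',x')) = 1 − ∑_{a<Aₖ-1} Xₖ·δ_{(a',x'),(a,xₖ)} if aₖ = Aₖ-1. Then q is a probability distribution, each p̃ₖ is a conditional quasiprobability distribution, and p(a₁,a₂|x₁,x₂) = ∑_{λ₁,λ₂} p̃₁(a₁|x₁,λ₁)·p̃₂(a₂|x₂,λ₂)·q(λ₁,λ₂) for all a₁,a₂,x₁,x₂. -/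
/-!
Split `qmeas A X a x λ` as `X · δ(λ = (a, x))` plus, on the last outcome only, the correction
`1 - X · δ(λ.2 = x)`. Summed over outcomes this gives `1` for every `λ`, and the correction
integrates to zero against any function of `λ` whose sum over outcomes does not depend on the
input. Non-signalling provides exactly this on each side, so `∑ p̃₁ p̃₂ q` collapses to
`X₁ X₂ q((a₁, x₁), (a₂, x₂)) = p(a₁, a₂ | x₁, x₂)`.
-/

/-- The quasi-deterministic local measurement distribution of Theorem 1. -/
def qmeas (A X : ℕ) (a : Fin A) (x : Fin X) (lam : Fin A × Fin X) : ℝ :=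
  if (a : ℕ) < A - 1 then (if lam = (a, x) then (X : ℝ) else 0)
  else 1 - ∑ a' : Fin A,
    (if (a' : ℕ) < A - 1 then (if lam = (a', x) then (X : ℝ) else 0) else 0)

open Finset

theorem qmeas_eq {A X : ℕ} (a : Fin A) (x : Fin X) (l : Fin A × Fin X) :
    qmeas A X a x l = (if l = (a, x) then (X : ℝ) else 0) +
      if (a : ℕ) = A - 1 then 1 - if l.2 = x then (X : ℝ) else 0 else 0 := by
  obtain ⟨b, y⟩ := l
  by_cases ha : (a : ℕ) < A - 1
  · simp [qmeas, ha, ha.ne]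
  · have hlast : (a : ℕ) = A - 1 := by omega
    have hb : (b : ℕ) < A - 1 ↔ b ≠ a := by rw [ne_eq, Fin.ext_iff]; omega
    have hsum : ∑ a' : Fin A, (if (a' : ℕ) < A - 1 then if (b, y) = (a', x) then (X : ℝ) else 0
        else 0) = if b ≠ a ∧ y = x then (X : ℝ) else 0 := by
      rw [sum_eq_single b (fun a' _ h => by simp [Ne.symm h]) (by simp)]
      simp [hb, ite_and]
    rw [qmeas, if_neg ha, if_pos hlast, hsum]
    by_cases hy : y = x <;> by_cases hba : b = a <;> simp [hy, hba]

theorem sum_qmeas {A X : ℕ} (x : Fin X) (l : Fin A × Fin X) : ∑ a, qmeas A X a x l = 1 := by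
  have hA : 0 < A := l.1.pos
  have hlast (a : Fin A) : (a : ℕ) = A - 1 ↔ a = ⟨A - 1, by omega⟩ := by simp [Fin.ext_iff]
  obtain ⟨b, y⟩ := l
  simp_rw [qmeas_eq, sum_add_distrib, hlast, sum_ite_eq', mem_univ, if_true]
  by_cases hy : y = x <;> simp [hy]

theorem sum_eq_card_smul_of_sum_fst_const {α ι M : Type*} [Fintype α] [Fintype ι]
    [AddCommMonoid M] (g : α × ι → M) (x : ι) (hg : ∀ x', ∑ a, g (a, x') = ∑ a, g (a, x)) :
    ∑ l, g l = Fintype.card ι • ∑ a, g (a, x) := by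
  rw [Fintype.sum_prod_type_right, sum_congr rfl fun x' _ => hg x', sum_const, card_univ]

theorem sum_qmeas_mul {A X : ℕ} (a : Fin A) (x : Fin X) (g : Fin A × Fin X → ℝ)
    (hg : ∀ x', ∑ a', g (a', x') = ∑ a', g (a', x)) :
    ∑ l, qmeas A X a x l * g l = X * g (a, x) := by
  have hslice : ∑ l, (if l.2 = x then (X : ℝ) else 0) * g l = X * ∑ a', g (a', x) := by
    rw [Fintype.sum_prod_type_right, sum_eq_single x (fun x' _ h => by simp [h]) (by simp)]
    simp [mul_sum]
  have hcorrection : ∑ l, (1 - if l.2 = x then (X : ℝ) else 0) * g l = 0 := by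
    rw [sum_congr rfl fun l _ => sub_mul .., sum_sub_distrib, hslice]
    simp [sum_eq_card_smul_of_sum_fst_const g x hg]
  simp_rw [qmeas_eq, add_mul, sum_add_distrib, ite_mul, zero_mul, sum_ite_eq', mem_univ, if_true,
    sum_ite_irrel, hcorrection, sum_const_zero, ite_self, add_zero]

theorem sum_sum_qmeas_mul_qmeas_mul {A₁ A₂ X₁ X₂ : ℕ}
    (Q : Fin A₁ × Fin X₁ → Fin A₂ × Fin X₂ → ℝ)
    (hQ₂ : ∀ l₁ x₂ x₂', ∑ a₂, Q l₁ (a₂, x₂) = ∑ a₂, Q l₁ (a₂, x₂'))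
    (hQ₁ : ∀ l₂ x₁ x₁', ∑ a₁, Q (a₁, x₁) l₂ = ∑ a₁, Q (a₁, x₁') l₂)
    (a₁ : Fin A₁) (a₂ : Fin A₂) (x₁ : Fin X₁) (x₂ : Fin X₂) :
    ∑ l₁, ∑ l₂, qmeas A₁ X₁ a₁ x₁ l₁ * qmeas A₂ X₂ a₂ x₂ l₂ * Q l₁ l₂ =
      X₁ * X₂ * Q (a₁, x₁) (a₂, x₂) := by
  calc ∑ l₁, ∑ l₂, qmeas A₁ X₁ a₁ x₁ l₁ * qmeas A₂ X₂ a₂ x₂ l₂ * Q l₁ l₂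
      = ∑ l₁, qmeas A₁ X₁ a₁ x₁ l₁ * ∑ l₂, qmeas A₂ X₂ a₂ x₂ l₂ * Q l₁ l₂ := by
        simp_rw [mul_sum, mul_assoc]
    _ = ∑ l₁, qmeas A₁ X₁ a₁ x₁ l₁ * (X₂ * Q l₁ (a₂, x₂)) := by
        simp_rw [sum_qmeas_mul a₂ x₂ _ fun x₂' => hQ₂ _ x₂' x₂]
    _ = X₁ * X₂ * Q (a₁, x₁) (a₂, x₂) := by
        rw [sum_qmeas_mul a₁ x₁ _ fun x₁' => by simp_rw [← mul_sum, hQ₁ _ x₁' x₁], mul_assoc]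

theorem sum_sum_eq_card_mul_card {α₁ α₂ ι₁ ι₂ : Type*} [Fintype α₁] [Fintype α₂]
    [Fintype ι₁] [Fintype ι₂] (p : α₁ → α₂ → ι₁ → ι₂ → ℝ)
    (hnorm : ∀ x₁ x₂, ∑ a₁, ∑ a₂, p a₁ a₂ x₁ x₂ = 1) :
    ∑ l₁ : α₁ × ι₁, ∑ l₂ : α₂ × ι₂, p l₁.1 l₂.1 l₁.2 l₂.2 =
      Fintype.card ι₁ * Fintype.card ι₂ := by
  simp_rw [Fintype.sum_prod_type_right]
  rw [sum_congr rfl fun x₁ _ => sum_comm]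
  simp [hnorm]

theorem stmt2_general {A₁ A₂ X₁ X₂ : ℕ}
    (hX₁ : 1 ≤ X₁) (hX₂ : 1 ≤ X₂)
    (p : Fin A₁ → Fin A₂ → Fin X₁ → Fin X₂ → ℝ)
    (hp0 : ∀ a₁ a₂ x₁ x₂, 0 ≤ p a₁ a₂ x₁ x₂)
    (hnorm : ∀ x₁ x₂, ∑ a₁, ∑ a₂, p a₁ a₂ x₁ x₂ = 1)
    (hNS2 : ∀ a₁ x₁ x₂ x₂', ∑ a₂, p a₁ a₂ x₁ x₂ = ∑ a₂, p a₁ a₂ x₁ x₂')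
    (hNS1 : ∀ a₂ x₂ x₁ x₁', ∑ a₁, p a₁ a₂ x₁ x₂ = ∑ a₁, p a₁ a₂ x₁' x₂) :
    (∀ (l₁ : Fin A₁ × Fin X₁) (l₂ : Fin A₂ × Fin X₂),
      0 ≤ p l₁.1 l₂.1 l₁.2 l₂.2 / ((X₁ : ℝ) * (X₂ : ℝ))) ∧
    (∑ l₁ : Fin A₁ × Fin X₁, ∑ l₂ : Fin A₂ × Fin X₂,
      p l₁.1 l₂.1 l₁.2 l₂.2 / ((X₁ : ℝ) * (X₂ : ℝ)) = 1) ∧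
    (∀ x₁ l₁, ∑ a₁, qmeas A₁ X₁ a₁ x₁ l₁ = 1) ∧
    (∀ x₂ l₂, ∑ a₂, qmeas A₂ X₂ a₂ x₂ l₂ = 1) ∧
    (∀ a₁ a₂ x₁ x₂, p a₁ a₂ x₁ x₂ =
      ∑ l₁ : Fin A₁ × Fin X₁, ∑ l₂ : Fin A₂ × Fin X₂,
        qmeas A₁ X₁ a₁ x₁ l₁ * qmeas A₂ X₂ a₂ x₂ l₂ *
          (p l₁.1 l₂.1 l₁.2 l₂.2 / ((X₁ : ℝ) * (X₂ : ℝ)))) := by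
  refine ⟨fun _ _ => div_nonneg (hp0 ..) (by positivity), ?_, sum_qmeas, sum_qmeas,
    fun a₁ a₂ x₁ x₂ => ?_⟩
  · simp_rw [← sum_div, sum_sum_eq_card_mul_card p hnorm, Fintype.card_fin]
    exact div_self (by positivity)
  · rw [sum_sum_qmeas_mul_qmeas_mul _ (fun l₁ x₂ x₂' => by simp_rw [← sum_div, hNS2 _ _ x₂ x₂'])
      (fun l₂ x₁ x₁' => by simp_rw [← sum_div, hNS1 _ _ x₁ x₁'])]
    have hX₁0 : (X₁ : ℝ) ≠ 0 := Nat.cast_ne_zero.2 x₁.pos.ne'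
    have hX₂0 : (X₂ : ℝ) ≠ 0 := Nat.cast_ne_zero.2 x₂.pos.ne'
    field_simp

/-- Theorem 1 construction (bipartite): the explicit hidden state distribution and
quasi-measurements reproduce any non-signalling distribution. -/
theorem stmt2 {A₁ A₂ X₁ X₂ : ℕ}
    (hA₁ : 1 ≤ A₁) (hA₂ : 1 ≤ A₂) (hX₁ : 1 ≤ X₁) (hX₂ : 1 ≤ X₂)
    (p : Fin A₁ → Fin A₂ → Fin X₁ → Fin X₂ → ℝ)
    (hp0 : ∀ a₁ a₂ x₁ x₂, 0 ≤ p a₁ a₂ x₁ x₂)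
    (hnorm : ∀ x₁ x₂, ∑ a₁, ∑ a₂, p a₁ a₂ x₁ x₂ = 1)
    (hNS2 : ∀ a₁ x₁ x₂ x₂', ∑ a₂, p a₁ a₂ x₁ x₂ = ∑ a₂, p a₁ a₂ x₁ x₂')
    (hNS1 : ∀ a₂ x₂ x₁ x₁', ∑ a₁, p a₁ a₂ x₁ x₂ = ∑ a₁, p a₁ a₂ x₁' x₂) :
    (∀ (l₁ : Fin A₁ × Fin X₁) (l₂ : Fin A₂ × Fin X₂),
      0 ≤ p l₁.1 l₂.1 l₁.2 l₂.2 / ((X₁ : ℝ) * (X₂ : ℝ))) ∧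
    (∑ l₁ : Fin A₁ × Fin X₁, ∑ l₂ : Fin A₂ × Fin X₂,
      p l₁.1 l₂.1 l₁.2 l₂.2 / ((X₁ : ℝ) * (X₂ : ℝ)) = 1) ∧
    (∀ x₁ l₁, ∑ a₁, qmeas A₁ X₁ a₁ x₁ l₁ = 1) ∧
    (∀ x₂ l₂, ∑ a₂, qmeas A₂ X₂ a₂ x₂ l₂ = 1) ∧
    (∀ a₁ a₂ x₁ x₂, p a₁ a₂ x₁ x₂ =
      ∑ l₁ : Fin A₁ × Fin X₁, ∑ l₂ : Fin A₂ × Fin X₂,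
        qmeas A₁ X₁ a₁ x₁ l₁ * qmeas A₂ X₂ a₂ x₂ l₂ *
          (p l₁.1 l₂.1 l₁.2 l₂.2 / ((X₁ : ℝ) * (X₂ : ℝ)))) :=
  stmt2_general hX₁ hX₂ p hp0 hnorm hNS2 hNS1
end

section
/- A bipartite conditional probability distribution p(a₁,a₂|x₁,x₂) is non-signalling if and only if it can be written as p(a₁,a₂|x₁,x₂) = ∑_{λ₁,λ₂} p̃₁(a₁|x₁,λ₁)·p̃₂(a₂|x₂,λ₂)·q(λ₁,λ₂) for some finite types Λ₁, Λ₂, some probability distribution q on Λ₁ × Λ₂, and conditional quasiprobability distributions p̃₁, p̃₂ (real-valued, summing to 1 over outcomes). -/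
/-!
Non-signalling makes the marginals `m₁ (a₁ | x₁)` and `m₂ (a₂ | x₂)` well defined, and
`T = p - m₁ m₂` then has vanishing marginals on both sides. Since `T` sums to zero over `a₁`,
`T (a₁, x₁) = ∑_{(b, y)} ([(a₁, x₁) = (b, y)] - [x₁ = y] / A₁) T (b, y)`, a sum of products
`u_λ v_λ` of functions summing to zero both over the outcomes and over `λ`. With a shared hidden
state uniform on `N = A₁ X₁ + 1` values (the `λ`'s and one extra state) and local responses
`m₁ + u_λ`, `m₂ + N v_λ` (just `m₁`, `m₂` in the extra state), the cross terms cancel and the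
average is `m₁ m₂ + T`. Conversely, summing a model over `a₂` removes `p̃₂` and leaves an
expression free of `x₂`.
-/

open Finset

section

variable {α₁ α₂ ι₁ ι₂ : Type*} [Fintype α₁] [Fintype α₂]

def IsNonSignalling (p : α₁ → α₂ → ι₁ → ι₂ → ℝ) : Prop :=
  (∀ a₁ x₁ x₂ x₂', ∑ a₂, p a₁ a₂ x₁ x₂ = ∑ a₂, p a₁ a₂ x₁ x₂') ∧
    (∀ a₂ x₂ x₁ x₁', ∑ a₁, p a₁ a₂ x₁ x₂ = ∑ a₁, p a₁ a₂ x₁' x₂)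

structure IsQuasiLocalModel {Λ₁ Λ₂ : Type*} [Fintype Λ₁] [Fintype Λ₂]
    (p : α₁ → α₂ → ι₁ → ι₂ → ℝ) (q : Λ₁ → Λ₂ → ℝ)
    (p₁ : α₁ → ι₁ → Λ₁ → ℝ) (p₂ : α₂ → ι₂ → Λ₂ → ℝ) : Prop where
  q_nonneg : ∀ l₁ l₂, 0 ≤ q l₁ l₂
  sum_q : ∑ l₁, ∑ l₂, q l₁ l₂ = 1
  sum_p₁ : ∀ x₁ l₁, ∑ a₁, p₁ a₁ x₁ l₁ = 1
  sum_p₂ : ∀ x₂ l₂, ∑ a₂, p₂ a₂ x₂ l₂ = 1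
  eq_sum : ∀ a₁ a₂ x₁ x₂, p a₁ a₂ x₁ x₂ = ∑ l₁, ∑ l₂, p₁ a₁ x₁ l₁ * p₂ a₂ x₂ l₂ * q l₁ l₂

namespace IsQuasiLocalModel

variable {Λ₁ Λ₂ : Type*} [Fintype Λ₁] [Fintype Λ₂] {p : α₁ → α₂ → ι₁ → ι₂ → ℝ}
  {q : Λ₁ → Λ₂ → ℝ} {p₁ : α₁ → ι₁ → Λ₁ → ℝ} {p₂ : α₂ → ι₂ → Λ₂ → ℝ}

theorem sum_snd_eq (h : IsQuasiLocalModel p q p₁ p₂) (a₁ : α₁) (x₁ : ι₁) (x₂ : ι₂) :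
    ∑ a₂, p a₁ a₂ x₁ x₂ = ∑ l₁, ∑ l₂, p₁ a₁ x₁ l₁ * q l₁ l₂ := by
  simp_rw [h.eq_sum]
  rw [sum_comm]
  refine sum_congr rfl fun l₁ _ => ?_
  rw [sum_comm]
  refine sum_congr rfl fun l₂ _ => ?_
  rw [← sum_mul, ← mul_sum, h.sum_p₂, mul_one]

theorem sum_fst_eq (h : IsQuasiLocalModel p q p₁ p₂) (a₂ : α₂) (x₁ : ι₁) (x₂ : ι₂) :
    ∑ a₁, p a₁ a₂ x₁ x₂ = ∑ l₁, ∑ l₂, p₂ a₂ x₂ l₂ * q l₁ l₂ := by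
  simp_rw [h.eq_sum]
  rw [sum_comm]
  refine sum_congr rfl fun l₁ _ => ?_
  rw [sum_comm]
  refine sum_congr rfl fun l₂ _ => ?_
  rw [← sum_mul, ← sum_mul, h.sum_p₁, one_mul]

theorem isNonSignalling (h : IsQuasiLocalModel p q p₁ p₂) : IsNonSignalling p :=
  ⟨fun a₁ x₁ x₂ x₂' => by rw [h.sum_snd_eq, h.sum_snd_eq],
    fun a₂ x₂ x₁ x₁' => by rw [h.sum_fst_eq, h.sum_fst_eq]⟩

theorem comp_equiv (h : IsQuasiLocalModel p q p₁ p₂) {M₁ M₂ : Type*} [Fintype M₁] [Fintype M₂]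
    (e₁ : M₁ ≃ Λ₁) (e₂ : M₂ ≃ Λ₂) :
    IsQuasiLocalModel p (fun m₁ m₂ => q (e₁ m₁) (e₂ m₂)) (fun a₁ x₁ m₁ => p₁ a₁ x₁ (e₁ m₁))
      (fun a₂ x₂ m₂ => p₂ a₂ x₂ (e₂ m₂)) where
  q_nonneg _ _ := h.q_nonneg _ _
  sum_q := by
    rw [← h.sum_q]
    exact Fintype.sum_equiv e₁ _ _ fun _ => Fintype.sum_equiv e₂ _ _ fun _ => rfl
  sum_p₁ _ _ := h.sum_p₁ _ _
  sum_p₂ _ _ := h.sum_p₂ _ _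
  eq_sum a₁ a₂ x₁ x₂ := by
    rw [h.eq_sum]
    refine Fintype.sum_equiv e₁.symm _ _ fun l₁ => Fintype.sum_equiv e₂.symm _ _ fun l₂ => ?_
    simp only [Equiv.apply_symm_apply]

theorem exists_fin (h : IsQuasiLocalModel p q p₁ p₂) :
    ∃ (n₁ n₂ : ℕ) (q : Fin n₁ → Fin n₂ → ℝ) (p₁ : α₁ → ι₁ → Fin n₁ → ℝ)
      (p₂ : α₂ → ι₂ → Fin n₂ → ℝ), IsQuasiLocalModel p q p₁ p₂ :=
  ⟨_, _, _, _, _, h.comp_equiv (Fintype.equivFin Λ₁).symm (Fintype.equivFin Λ₂).symm⟩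

end IsQuasiLocalModel

section CenteredIndicator

variable {α ι : Type*} [Fintype α] [DecidableEq α] [DecidableEq ι]

noncomputable def centeredIndicator (a : α) (x : ι) (z : α × ι) : ℝ :=
  (if (a, x) = z then 1 else 0) - if x = z.2 then (Fintype.card α : ℝ)⁻¹ else 0

theorem sum_centeredIndicator_left (x : ι) (z : α × ι) : ∑ a, centeredIndicator a x z = 0 := by
  have : Nonempty α := ⟨z.1⟩
  obtain ⟨b, y⟩ := z
  by_cases hxy : x = y
  · simp [centeredIndicator, hxy, sum_sub_distrib]
  · simp [centeredIndicator, hxy]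

theorem sum_centeredIndicator_right [Fintype ι] (a : α) (x : ι) :
    ∑ z, centeredIndicator a x z = 0 := by
  have : Nonempty α := ⟨a⟩
  simp [centeredIndicator, sum_sub_distrib, Fintype.sum_prod_type]

theorem sum_centeredIndicator_mul [Fintype ι] (f : α × ι → ℝ) (hf : ∀ y, ∑ b, f (b, y) = 0)
    (a : α) (x : ι) : ∑ z, centeredIndicator a x z * f z = f (a, x) := by
  simp [centeredIndicator, sub_mul, sum_sub_distrib, Fintype.sum_prod_type, ← mul_sum, hf]

end CenteredIndicator

theorem exists_isQuasiLocalModel_of_eq_mul_add_sum_mul {Λ : Type*} [Fintype Λ]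
    {p : α₁ → α₂ → ι₁ → ι₂ → ℝ} (m₁ : α₁ → ι₁ → ℝ) (m₂ : α₂ → ι₂ → ℝ)
    (u : α₁ → ι₁ → Λ → ℝ) (v : α₂ → ι₂ → Λ → ℝ)
    (hm₁ : ∀ x₁, ∑ a₁, m₁ a₁ x₁ = 1) (hm₂ : ∀ x₂, ∑ a₂, m₂ a₂ x₂ = 1)
    (hu : ∀ x₁ l, ∑ a₁, u a₁ x₁ l = 0) (hv : ∀ x₂ l, ∑ a₂, v a₂ x₂ l = 0)
    (hu' : ∀ a₁ x₁, ∑ l, u a₁ x₁ l = 0) (hv' : ∀ a₂ x₂, ∑ l, v a₂ x₂ l = 0)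
    (hp : ∀ a₁ a₂ x₁ x₂, p a₁ a₂ x₁ x₂ = m₁ a₁ x₁ * m₂ a₂ x₂ + ∑ l, u a₁ x₁ l * v a₂ x₂ l) :
    ∃ (q : Option Λ → Option Λ → ℝ) (p₁ : α₁ → ι₁ → Option Λ → ℝ)
      (p₂ : α₂ → ι₂ → Option Λ → ℝ), IsQuasiLocalModel p q p₁ p₂ := by
  classical
  set N : ℝ := Fintype.card Λ + 1 with hN
  have hN0 : N ≠ 0 := by positivity
  refine ⟨fun o o' => if o = o' then N⁻¹ else 0, fun a₁ x₁ o => m₁ a₁ x₁ + o.elim 0 (u a₁ x₁),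
    fun a₂ x₂ o => m₂ a₂ x₂ + N * o.elim 0 (v a₂ x₂), ⟨?_, ?_, ?_, ?_, ?_⟩⟩
  · intro o o'
    split_ifs <;> positivity
  · simp only [sum_ite_eq, mem_univ, if_true, sum_const, card_univ, Fintype.card_option,
      nsmul_eq_mul, Nat.cast_add, Nat.cast_one, ← hN]
    exact mul_inv_cancel₀ hN0
  · intro x₁ o
    cases o <;> simp [sum_add_distrib, hm₁, hu]
  · intro x₂ o
    cases o <;> simp [sum_add_distrib, ← mul_sum, hm₂, hv]
  · intro a₁ a₂ x₁ x₂
    simp only [hp, mul_ite, mul_zero, sum_ite_eq, mem_univ, if_true, Fintype.sum_option, Option.elim]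
    have key : ∀ l, (m₁ a₁ x₁ + u a₁ x₁ l) * (m₂ a₂ x₂ + N * v a₂ x₂ l) * N⁻¹ =
        m₁ a₁ x₁ * m₂ a₂ x₂ * N⁻¹ + m₂ a₂ x₂ * N⁻¹ * u a₁ x₁ l + m₁ a₁ x₁ * v a₂ x₂ l +
          u a₁ x₁ l * v a₂ x₂ l := fun l => by field_simp; ring
    simp only [key, sum_add_distrib, ← mul_sum, hu', hv', sum_const, card_univ, nsmul_eq_mul]
    field_simp
    ring

theorem IsNonSignalling.exists_isQuasiLocalModel [Fintype ι₁] [DecidableEq α₁] [DecidableEq ι₁]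
    {p : α₁ → α₂ → ι₁ → ι₂ → ℝ} (h : IsNonSignalling p)
    (hnorm : ∀ x₁ x₂, ∑ a₁, ∑ a₂, p a₁ a₂ x₁ x₂ = 1) (x₁₀ : ι₁) (x₂₀ : ι₂) :
    ∃ (q : Option (α₁ × ι₁) → Option (α₁ × ι₁) → ℝ) (p₁ : α₁ → ι₁ → Option (α₁ × ι₁) → ℝ)
      (p₂ : α₂ → ι₂ → Option (α₁ × ι₁) → ℝ), IsQuasiLocalModel p q p₁ p₂ := by
  set m₁ : α₁ → ι₁ → ℝ := fun a₁ x₁ => ∑ a₂, p a₁ a₂ x₁ x₂₀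
  set m₂ : α₂ → ι₂ → ℝ := fun a₂ x₂ => ∑ a₁, p a₁ a₂ x₁₀ x₂
  have hm₁ (x₁ : ι₁) : ∑ a₁, m₁ a₁ x₁ = 1 := hnorm x₁ x₂₀
  have hm₂ (x₂ : ι₂) : ∑ a₂, m₂ a₂ x₂ = 1 := by rw [sum_comm]; exact hnorm x₁₀ x₂
  set T : α₁ → α₂ → ι₁ → ι₂ → ℝ := fun a₁ a₂ x₁ x₂ => p a₁ a₂ x₁ x₂ - m₁ a₁ x₁ * m₂ a₂ x₂
  have hT₁ (a₂ : α₂) (x₁ : ι₁) (x₂ : ι₂) : ∑ a₁, T a₁ a₂ x₁ x₂ = 0 := by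
    simp only [T, sum_sub_distrib, ← sum_mul, hm₁, one_mul, h.2 a₂ x₂ x₁ x₁₀, m₂, sub_self]
  have hT₂ (a₁ : α₁) (x₁ : ι₁) (x₂ : ι₂) : ∑ a₂, T a₁ a₂ x₁ x₂ = 0 := by
    simp only [T, sum_sub_distrib, ← mul_sum, hm₂, mul_one, h.1 a₁ x₁ x₂ x₂₀, m₁, sub_self]
  refine exists_isQuasiLocalModel_of_eq_mul_add_sum_mul m₁ m₂ centeredIndicator
    (fun a₂ x₂ z => T z.1 a₂ z.2 x₂) hm₁ hm₂ sum_centeredIndicator_left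
    (fun x₂ z => hT₂ z.1 z.2 x₂) sum_centeredIndicator_right (fun a₂ x₂ => ?_) fun a₁ a₂ x₁ x₂ => ?_
  · simp only [Fintype.sum_prod_type_right, hT₁, sum_const_zero]
  · rw [sum_centeredIndicator_mul _ fun y => hT₁ a₂ y x₂]
    ring

end

theorem stmt3_general {A₁ A₂ X₁ X₂ : ℕ}
    (hX₁ : 1 ≤ X₁) (hX₂ : 1 ≤ X₂)
    (p : Fin A₁ → Fin A₂ → Fin X₁ → Fin X₂ → ℝ)
    (hnorm : ∀ x₁ x₂, ∑ a₁, ∑ a₂, p a₁ a₂ x₁ x₂ = 1) :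
    ((∀ a₁ x₁ x₂ x₂', ∑ a₂, p a₁ a₂ x₁ x₂ = ∑ a₂, p a₁ a₂ x₁ x₂') ∧
     (∀ a₂ x₂ x₁ x₁', ∑ a₁, p a₁ a₂ x₁ x₂ = ∑ a₁, p a₁ a₂ x₁' x₂)) ↔
    ∃ (n₁ n₂ : ℕ) (q : Fin n₁ → Fin n₂ → ℝ)
      (p₁ : Fin A₁ → Fin X₁ → Fin n₁ → ℝ) (p₂ : Fin A₂ → Fin X₂ → Fin n₂ → ℝ),
      (∀ l₁ l₂, 0 ≤ q l₁ l₂) ∧ (∑ l₁, ∑ l₂, q l₁ l₂ = 1) ∧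
      (∀ x₁ l₁, ∑ a₁, p₁ a₁ x₁ l₁ = 1) ∧
      (∀ x₂ l₂, ∑ a₂, p₂ a₂ x₂ l₂ = 1) ∧
      (∀ a₁ a₂ x₁ x₂, p a₁ a₂ x₁ x₂ =
        ∑ l₁, ∑ l₂, p₁ a₁ x₁ l₁ * p₂ a₂ x₂ l₂ * q l₁ l₂) := by
  constructor
  · intro hns
    obtain ⟨q, p₁, p₂, hmodel⟩ :=
      IsNonSignalling.exists_isQuasiLocalModel hns hnorm ⟨0, hX₁⟩ ⟨0, hX₂⟩
    obtain ⟨n₁, n₂, q, p₁, p₂, ⟨h₀, h₁, h₂, h₃, h₄⟩⟩ := hmodel.exists_fin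
    exact ⟨n₁, n₂, q, p₁, p₂, h₀, h₁, h₂, h₃, h₄⟩
  · rintro ⟨n₁, n₂, q, p₁, p₂, h₀, h₁, h₂, h₃, h₄⟩
    exact (IsQuasiLocalModel.mk h₀ h₁ h₂ h₃ h₄).isNonSignalling

/-- Theorem 1 (bipartite): p is non-signalling iff it admits a local model with a
genuine probability distribution over hidden states and local quasiprobability
measurement distributions. -/
theorem stmt3 {A₁ A₂ X₁ X₂ : ℕ}
    (hA₁ : 1 ≤ A₁) (hA₂ : 1 ≤ A₂) (hX₁ : 1 ≤ X₁) (hX₂ : 1 ≤ X₂)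
    (p : Fin A₁ → Fin A₂ → Fin X₁ → Fin X₂ → ℝ)
    (hp0 : ∀ a₁ a₂ x₁ x₂, 0 ≤ p a₁ a₂ x₁ x₂)
    (hnorm : ∀ x₁ x₂, ∑ a₁, ∑ a₂, p a₁ a₂ x₁ x₂ = 1) :
    ((∀ a₁ x₁ x₂ x₂', ∑ a₂, p a₁ a₂ x₁ x₂ = ∑ a₂, p a₁ a₂ x₁ x₂') ∧
     (∀ a₂ x₂ x₁ x₁', ∑ a₁, p a₁ a₂ x₁ x₂ = ∑ a₁, p a₁ a₂ x₁' x₂)) ↔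
    ∃ (n₁ n₂ : ℕ) (q : Fin n₁ → Fin n₂ → ℝ)
      (p₁ : Fin A₁ → Fin X₁ → Fin n₁ → ℝ) (p₂ : Fin A₂ → Fin X₂ → Fin n₂ → ℝ),
      (∀ l₁ l₂, 0 ≤ q l₁ l₂) ∧ (∑ l₁, ∑ l₂, q l₁ l₂ = 1) ∧
      (∀ x₁ l₁, ∑ a₁, p₁ a₁ x₁ l₁ = 1) ∧
      (∀ x₂ l₂, ∑ a₂, p₂ a₂ x₂ l₂ = 1) ∧
      (∀ a₁ a₂ x₁ x₂, p a₁ a₂ x₁ x₂ =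
        ∑ l₁, ∑ l₂, p₁ a₁ x₁ l₁ * p₂ a₂ x₂ l₂ * q l₁ l₂) :=
  stmt3_general hX₁ hX₂ p hnorm
end

section
/- A bipartite conditional probability distribution p(a₁,a₂|x₁,x₂) is non-signalling if and only if it can be written as p(a₁,a₂|x₁,x₂) = ∑_{λ₁,λ₂} p₁(a₁|x₁,λ₁)·p₂(a₂|x₂,λ₂)·q̃(λ₁,λ₂) for some finite types Λ₁, Λ₂, some quasiprobability distribution q̃ on Λ₁ × Λ₂ (real-valued, summing to 1, possibly negative), and genuine conditional probability distributions p₁, p₂ (nonnegative, summing to 1 over outcomes). -/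
/-!
Encode a behaviour `p(a₁ a₂ | x₁ x₂)` as a matrix `P` with rows `(a₁, x₁)` and columns
`(a₂, x₂)`, and the response of party `k` as a matrix `Dₖ ((a, x), λ) = pₖ(a | x, λ)`; a local
model is then `P = D₁ * Q * D₂ᵀ`.

Summing a local model over one party's outcomes removes that party's response, which leaves an
expression independent of its input: local models are non-signalling.

Conversely, take the hidden variable `λ = (b, y)` (an outcome and an input) with the response
"on input `x` output `b` if `y = x`, otherwise a uniformly random outcome". On vectors `f` whose
marginal `∑ a, f (a, x)` does not depend on `x`, this response has an explicit right inverse `E`.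
Non-signalling says exactly that the columns of `P` have this property for party 1 and its rows for
party 2, so `P = D₁ * (E₁ * P * E₂ᵀ) * D₂ᵀ`. Since the responses are stochastic, the total mass
of `Q = E₁ * P * E₂ᵀ` equals that of `P` at any pair of inputs, namely `1`.
-/

open Finset Matrix

namespace NonSignalling

variable {α ι α₁ α₂ ι₁ ι₂ Λ Λ₁ Λ₂ κ : Type*}

lemma sum_sum_comp_equiv {Λ₁' Λ₂' : Type*} [Fintype Λ₁] [Fintype Λ₂] [Fintype Λ₁']
    [Fintype Λ₂'] (e₁ : Λ₁' ≃ Λ₁) (e₂ : Λ₂' ≃ Λ₂) (F : Λ₁ → Λ₂ → ℝ) :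
    ∑ l₁, ∑ l₂, F (e₁ l₁) (e₂ l₂) = ∑ m₁, ∑ m₂, F m₁ m₂ := by
  simp only [e₂.sum_comp (F _)]
  exact e₁.sum_comp fun m₁ => ∑ m₂, F m₁ m₂

section LocalModel

variable [Fintype α] [Fintype α₁] [Fintype α₂] [Fintype Λ] [Fintype Λ₁] [Fintype Λ₂]

def IsNonSignalling (P : Matrix (α₁ × ι₁) (α₂ × ι₂) ℝ) : Prop :=
  (∀ k₂ x x', ∑ a, P (a, x) k₂ = ∑ a, P (a, x') k₂) ∧
    ∀ k₁ x x', ∑ a, P k₁ (a, x) = ∑ a, P k₁ (a, x')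

lemma mul_mul_transpose_apply {κ' : Type*} (D₁ : Matrix κ Λ₁ ℝ) (Q : Matrix Λ₁ Λ₂ ℝ)
    (D₂ : Matrix κ' Λ₂ ℝ) (k : κ) (k' : κ') :
    (D₁ * Q * D₂ᵀ) k k' = ∑ l₁, ∑ l₂, D₁ k l₁ * D₂ k' l₂ * Q l₁ l₂ := by
  simp only [mul_apply, transpose_apply, sum_mul]
  rw [sum_comm]
  exact sum_congr rfl fun _ _ => sum_congr rfl fun _ _ => by ring

lemma sum_mul_apply_of_sum_eq_one (D : Matrix (α × ι) Λ ℝ) (hD : ∀ x l, ∑ a, D (a, x) l = 1)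
    (M : Matrix Λ κ ℝ) (x : ι) (k : κ) : ∑ a, (D * M) (a, x) k = ∑ l, M l k := by
  simp only [mul_apply]
  rw [sum_comm]
  simp [← sum_mul, hD]

lemma sum_mul_transpose_apply_of_sum_eq_one (D : Matrix (α × ι) Λ ℝ)
    (hD : ∀ x l, ∑ a, D (a, x) l = 1) (M : Matrix κ Λ ℝ) (k : κ) (x : ι) :
    ∑ a, (M * Dᵀ) k (a, x) = ∑ l, M k l := by
  simp only [mul_apply, transpose_apply]
  rw [sum_comm]
  simp [← mul_sum, hD]

variable {P : Matrix (α₁ × ι₁) (α₂ × ι₂) ℝ} {D₁ : Matrix (α₁ × ι₁) Λ₁ ℝ}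
  {D₂ : Matrix (α₂ × ι₂) Λ₂ ℝ} {Q : Matrix Λ₁ Λ₂ ℝ}

lemma isNonSignalling_of_eq_mul_mul_transpose (hD₁ : ∀ x l, ∑ a, D₁ (a, x) l = 1)
    (hD₂ : ∀ x l, ∑ a, D₂ (a, x) l = 1) (hP : P = D₁ * Q * D₂ᵀ) : IsNonSignalling P := by
  subst hP
  constructor
  · intro k₂ x x'
    simp only [Matrix.mul_assoc, sum_mul_apply_of_sum_eq_one D₁ hD₁]
  · intro k₁ x x'
    simp only [sum_mul_transpose_apply_of_sum_eq_one D₂ hD₂]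

lemma sum_sum_eq_of_eq_mul_mul_transpose (hD₁ : ∀ x l, ∑ a, D₁ (a, x) l = 1)
    (hD₂ : ∀ x l, ∑ a, D₂ (a, x) l = 1) (hP : P = D₁ * Q * D₂ᵀ) (x₁ : ι₁) (x₂ : ι₂) :
    ∑ a₁, ∑ a₂, P (a₁, x₁) (a₂, x₂) = ∑ l₁, ∑ l₂, Q l₁ l₂ := by
  subst hP
  simp only [sum_mul_transpose_apply_of_sum_eq_one D₂ hD₂]
  rw [sum_comm]
  simp only [sum_mul_apply_of_sum_eq_one D₁ hD₁]
  exact sum_comm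

end LocalModel

section Response

variable (α ι) [Fintype α] [DecidableEq α] [DecidableEq ι]

/-- The hidden variable `(b, y)` makes the party output `b` on input `y` and a uniformly random
outcome on every other input. -/
noncomputable def response : Matrix (α × ι) (α × ι) ℝ :=
  of fun m n => if n.2 = m.2 then (if n.1 = m.1 then 1 else 0) else (Fintype.card α : ℝ)⁻¹

/-- A right inverse of `response α ι` on the vectors whose marginal on `α` does not depend on the
input: it subtracts `(X - 1) / (A X)` times the marginal, which is what the uniform outputs of
`response` on the `X - 1` other inputs add back. -/
noncomputable def responseRightInv [Fintype ι] : Matrix (α × ι) (α × ι) ℝ :=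
  1 - (((Fintype.card ι : ℝ) - 1) / (Fintype.card α * Fintype.card ι)) •
    of fun m n => if n.2 = m.2 then 1 else 0

variable {α ι}

lemma response_nonneg (m n : α × ι) : 0 ≤ response α ι m n := by
  simp only [response, of_apply]
  split_ifs <;> positivity

lemma sum_response [Nonempty α] (x : ι) (n : α × ι) : ∑ a, response α ι (a, x) n = 1 := by
  by_cases h : n.2 = x <;> simp [response, h]

variable [Fintype ι]

lemma response_mulVec_apply (g : α × ι → ℝ) (a : α) (x : ι) :
    (response α ι *ᵥ g) (a, x) =
      g (a, x) + (Fintype.card α : ℝ)⁻¹ * (∑ n, g n - ∑ b, g (b, x)) := by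
  simp only [response, mulVec, dotProduct, of_apply, Fintype.sum_prod_type_right]
  rw [Fintype.sum_eq_add_sum_compl x, Fintype.sum_eq_add_sum_compl x]
  have hoff : ∀ y ∈ ({x}ᶜ : Finset ι),
      ∑ b, (if y = x then (if b = a then 1 else 0) else (Fintype.card α : ℝ)⁻¹) * g (b, y) =
        (Fintype.card α : ℝ)⁻¹ * ∑ b, g (b, y) := by
    intro y hy
    simp only [if_neg (show y ≠ x by simpa using hy), mul_sum]
  rw [sum_congr rfl hoff, ← mul_sum]
  simp

lemma responseRightInv_mulVec_apply (f : α × ι → ℝ) (b : α) (y : ι) :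
    (responseRightInv α ι *ᵥ f) (b, y) =
      f (b, y) - ((Fintype.card ι : ℝ) - 1) / (Fintype.card α * Fintype.card ι) *
        ∑ a, f (a, y) := by
  rw [responseRightInv, sub_mulVec, one_mulVec, smul_mulVec]
  simp only [Pi.sub_apply, Pi.smul_apply, smul_eq_mul, mulVec, dotProduct, of_apply,
    Fintype.sum_prod_type, boole_mul, sum_ite_eq', mem_univ, if_true]

lemma response_mulVec_responseRightInv_mulVec [Nonempty α] (f : α × ι → ℝ)
    (hf : ∀ x x', ∑ a, f (a, x) = ∑ a, f (a, x')) :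
    response α ι *ᵥ (responseRightInv α ι *ᵥ f) = f := by
  ext ⟨a, x⟩
  have : Nonempty ι := ⟨x⟩
  set c := ∑ a, f (a, x)
  set t : ℝ := ((Fintype.card ι : ℝ) - 1) / (Fintype.card α * Fintype.card ι)
  have hcol : ∀ y, ∑ b, (responseRightInv α ι *ᵥ f) (b, y) = (1 - Fintype.card α * t) * c := by
    intro y
    simp only [responseRightInv_mulVec_apply, sum_sub_distrib, sum_const, card_univ,
      nsmul_eq_mul, hf y x]
    ring
  have htotal : ∑ n, (responseRightInv α ι *ᵥ f) n =
      Fintype.card ι * ((1 - Fintype.card α * t) * c) := by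
    simp [Fintype.sum_prod_type_right, hcol]
  rw [response_mulVec_apply, htotal, hcol, responseRightInv_mulVec_apply]
  simp only [t]
  field_simp
  ring

lemma response_mul_responseRightInv_mul [Nonempty α] (P : Matrix (α × ι) κ ℝ)
    (hP : ∀ k x x', ∑ a, P (a, x) k = ∑ a, P (a, x') k) :
    response α ι * responseRightInv α ι * P = P := by
  ext m k
  have hcol := congrFun (response_mulVec_responseRightInv_mulVec (fun n => P n k) (hP k)) m
  rw [mulVec_mulVec] at hcol
  exact hcol

variable [Fintype α₁] [Fintype α₂] [Fintype ι₁] [Fintype ι₂] [DecidableEq α₁] [DecidableEq α₂]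
  [DecidableEq ι₁] [DecidableEq ι₂] [Nonempty α₁] [Nonempty α₂]

theorem IsNonSignalling.eq_response_mul_mul_transpose {P : Matrix (α₁ × ι₁) (α₂ × ι₂) ℝ}
    (hP : IsNonSignalling P) :
    P = response α₁ ι₁ * (responseRightInv α₁ ι₁ * P * (responseRightInv α₂ ι₂)ᵀ) *
      (response α₂ ι₂)ᵀ := by
  have hrows : P * (responseRightInv α₂ ι₂)ᵀ * (response α₂ ι₂)ᵀ = P := by
    simpa only [transpose_mul, transpose_transpose, Matrix.mul_assoc] using
      congrArg transpose (response_mul_responseRightInv_mul Pᵀ hP.2)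
  calc P = response α₁ ι₁ * responseRightInv α₁ ι₁ *
        (P * (responseRightInv α₂ ι₂)ᵀ * (response α₂ ι₂)ᵀ) := by
        rw [hrows, response_mul_responseRightInv_mul P hP.1]
    _ = _ := by simp only [Matrix.mul_assoc]

end Response

end NonSignalling

open NonSignalling in
theorem stmt4_general {A₁ A₂ X₁ X₂ : ℕ}
    (hA₁ : 1 ≤ A₁) (hA₂ : 1 ≤ A₂) (hX₁ : 1 ≤ X₁) (hX₂ : 1 ≤ X₂)
    (p : Fin A₁ → Fin A₂ → Fin X₁ → Fin X₂ → ℝ)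
    (hnorm : ∀ x₁ x₂, ∑ a₁, ∑ a₂, p a₁ a₂ x₁ x₂ = 1) :
    ((∀ a₁ x₁ x₂ x₂', ∑ a₂, p a₁ a₂ x₁ x₂ = ∑ a₂, p a₁ a₂ x₁ x₂') ∧
     (∀ a₂ x₂ x₁ x₁', ∑ a₁, p a₁ a₂ x₁ x₂ = ∑ a₁, p a₁ a₂ x₁' x₂)) ↔
    ∃ (n₁ n₂ : ℕ) (q : Fin n₁ → Fin n₂ → ℝ)
      (p₁ : Fin A₁ → Fin X₁ → Fin n₁ → ℝ) (p₂ : Fin A₂ → Fin X₂ → Fin n₂ → ℝ),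
      (∑ l₁, ∑ l₂, q l₁ l₂ = 1) ∧
      (∀ a₁ x₁ l₁, 0 ≤ p₁ a₁ x₁ l₁) ∧ (∀ a₂ x₂ l₂, 0 ≤ p₂ a₂ x₂ l₂) ∧
      (∀ x₁ l₁, ∑ a₁, p₁ a₁ x₁ l₁ = 1) ∧
      (∀ x₂ l₂, ∑ a₂, p₂ a₂ x₂ l₂ = 1) ∧
      (∀ a₁ a₂ x₁ x₂, p a₁ a₂ x₁ x₂ =
        ∑ l₁, ∑ l₂, p₁ a₁ x₁ l₁ * p₂ a₂ x₂ l₂ * q l₁ l₂) := by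
  let P : Matrix (Fin A₁ × Fin X₁) (Fin A₂ × Fin X₂) ℝ := of fun k₁ k₂ => p k₁.1 k₂.1 k₁.2 k₂.2
  constructor
  · rintro ⟨hns₁, hns₂⟩
    have : NeZero A₁ := ⟨by omega⟩
    have : NeZero A₂ := ⟨by omega⟩
    have hP := IsNonSignalling.eq_response_mul_mul_transpose (P := P)
      ⟨fun k₂ => hns₂ k₂.1 k₂.2, fun k₁ => hns₁ k₁.1 k₁.2⟩
    set Q := responseRightInv (Fin A₁) (Fin X₁) * P * (responseRightInv (Fin A₂) (Fin X₂))ᵀ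
    have hQ : ∑ m₁, ∑ m₂, Q m₁ m₂ = 1 :=
      (sum_sum_eq_of_eq_mul_mul_transpose sum_response sum_response hP ⟨0, hX₁⟩ ⟨0, hX₂⟩).symm.trans
        (hnorm _ _)
    let e₁ := (finProdFinEquiv (m := A₁) (n := X₁)).symm
    let e₂ := (finProdFinEquiv (m := A₂) (n := X₂)).symm
    refine ⟨A₁ * X₁, A₂ * X₂, fun l₁ l₂ => Q (e₁ l₁) (e₂ l₂),
      fun a x l => response _ _ (a, x) (e₁ l), fun a x l => response _ _ (a, x) (e₂ l),
      (sum_sum_comp_equiv e₁ e₂ Q).trans hQ, fun _ _ _ => response_nonneg _ _,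
      fun _ _ _ => response_nonneg _ _, fun _ _ => sum_response _ _, fun _ _ => sum_response _ _,
      fun a₁ a₂ x₁ x₂ => ?_⟩
    have hentry := congrFun (congrFun hP (a₁, x₁)) (a₂, x₂)
    rw [mul_mul_transpose_apply] at hentry
    exact hentry.trans (sum_sum_comp_equiv e₁ e₂ _).symm
  · rintro ⟨n₁, n₂, q, p₁, p₂, -, -, -, hp₁, hp₂, hrep⟩
    have hP : P = of (fun k l => p₁ k.1 k.2 l) * of q * (of fun k l => p₂ k.1 k.2 l)ᵀ := by
      ext k₁ k₂
      rw [mul_mul_transpose_apply]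
      exact hrep _ _ _ _
    obtain ⟨hns₂, hns₁⟩ := isNonSignalling_of_eq_mul_mul_transpose hp₁ hp₂ hP
    exact ⟨fun a₁ x₁ => hns₁ (a₁, x₁), fun a₂ x₂ => hns₂ (a₂, x₂)⟩

/-- Theorem 2 (bipartite): p is non-signalling iff it admits a local model with a
quasiprobability distribution over hidden states and genuine local conditional
probability distributions. -/
theorem stmt4 {A₁ A₂ X₁ X₂ : ℕ}
    (hA₁ : 1 ≤ A₁) (hA₂ : 1 ≤ A₂) (hX₁ : 1 ≤ X₁) (hX₂ : 1 ≤ X₂)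
    (p : Fin A₁ → Fin A₂ → Fin X₁ → Fin X₂ → ℝ)
    (hp0 : ∀ a₁ a₂ x₁ x₂, 0 ≤ p a₁ a₂ x₁ x₂)
    (hnorm : ∀ x₁ x₂, ∑ a₁, ∑ a₂, p a₁ a₂ x₁ x₂ = 1) :
    ((∀ a₁ x₁ x₂ x₂', ∑ a₂, p a₁ a₂ x₁ x₂ = ∑ a₂, p a₁ a₂ x₁ x₂') ∧
     (∀ a₂ x₂ x₁ x₁', ∑ a₁, p a₁ a₂ x₁ x₂ = ∑ a₁, p a₁ a₂ x₁' x₂)) ↔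
    ∃ (n₁ n₂ : ℕ) (q : Fin n₁ → Fin n₂ → ℝ)
      (p₁ : Fin A₁ → Fin X₁ → Fin n₁ → ℝ) (p₂ : Fin A₂ → Fin X₂ → Fin n₂ → ℝ),
      (∑ l₁, ∑ l₂, q l₁ l₂ = 1) ∧
      (∀ a₁ x₁ l₁, 0 ≤ p₁ a₁ x₁ l₁) ∧ (∀ a₂ x₂ l₂, 0 ≤ p₂ a₂ x₂ l₂) ∧
      (∀ x₁ l₁, ∑ a₁, p₁ a₁ x₁ l₁ = 1) ∧
      (∀ x₂ l₂, ∑ a₂, p₂ a₂ x₂ l₂ = 1) ∧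
      (∀ a₁ a₂ x₁ x₂, p a₁ a₂ x₁ x₂ =
        ∑ l₁, ∑ l₂, p₁ a₁ x₁ l₁ * p₂ a₂ x₂ l₂ * q l₁ l₂) :=
  stmt4_general hA₁ hA₂ hX₁ hX₂ p hnorm
end

section
/- Let p(a₁,a₂|x₁,x₂) be a bipartite conditional probability distribution. Then p is non-signalling if and only if there exist finite-dimensional Hilbert spaces H₁, H₂, POVM elements M⁽ᵏ⁾_{a|x} on Hₖ (positive semidefinite with ∑_a M⁽ᵏ⁾_{a|x} = I for each x), and a Hermitian operator ρ̃ on H₁ ⊗ H₂ with Tr(ρ̃) = 1 (not necessarily positive), all diagonal in a fixed product orthonormal basis, such that p(a₁,a₂|x₁,x₂) = Tr((M⁽¹⁾_{a₁|x₁} ⊗ M⁽²⁾_{a₂|x₂}) ρ̃). -/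
/-!
A non-signalling `p` has a local hidden-variable model with signed weights. Party `k` holds
`s = (a', x') ∈ Aₖ × Xₖ` and answers `a'` on input `x'`, uniformly at random on every other input.
Averaging a weight `g` against this response on input `x` gives `g (a, x) + (X - 1) m / A`, where
`m` is the mass of `g` on each input, and the response has total mass `X`; so subtracting
`(X - 1) / (A X²)` times the total mass of `g` (`debias`) inverts the averaging whenever the
per-input masses of `g` agree. Correcting `p` this way in both variables gives signed weights that
reproduce `p`: the two non-signalling conditions are exactly what make the two corrections valid.
Diagonal matrices with these entries are the POVMs and the quasi-state, of trace one by
normalisation. Conversely, summing the Born rule over one party's outcomes with `∑ₐ M_{a|x} = 1`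
leaves a quantity independent of that party's input.
-/

open Matrix Kronecker ComplexOrder Finset

section Debias

variable {α ι : Type*} [Fintype α] [Fintype ι]

noncomputable def debias (g : α × ι → ℝ) (s : α × ι) : ℝ :=
  g s - (Fintype.card ι - 1) / (Fintype.card α * Fintype.card ι ^ 2) * ∑ s', g s'

lemma sum_debias {β : Type*} [Fintype β] (g : β → α × ι → ℝ) (s : α × ι) :
    ∑ i, debias (g i) s = debias (fun s' => ∑ i, g i s') s := by
  simp only [debias, sum_sub_distrib, ← mul_sum]
  rw [sum_comm (f := fun i s' => g i s')]

end Debias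

section LocalResponse

variable {α ι : Type*} [Fintype α] [DecidableEq α] [DecidableEq ι]

noncomputable def localResponse (a : α) (x : ι) (s : α × ι) : ℝ :=
  if s.2 = x then (if s.1 = a then 1 else 0) else (Fintype.card α : ℝ)⁻¹

lemma localResponse_nonneg (a : α) (x : ι) (s : α × ι) : 0 ≤ localResponse a x s := by
  unfold localResponse; split_ifs <;> positivity

lemma sum_localResponse (x : ι) (s : α × ι) : ∑ a, localResponse a x s = 1 := by
  have : (Fintype.card α : ℝ) ≠ 0 := by exact_mod_cast (Fintype.card_pos_iff.mpr ⟨s.1⟩).ne'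
  by_cases h : s.2 = x <;> simp [localResponse, h, this]

variable [Fintype ι]

lemma sum_localResponse_mul (g : α × ι → ℝ) (a : α) (x : ι) :
    ∑ s, localResponse a x s * g s
      = g (a, x) + (∑ s, g s - ∑ a', g (a', x)) / Fintype.card α := by
  have hsplit : ∀ s : α × ι, localResponse a x s * g s
      = (if s = (a, x) then g s else 0) + (g s - if s.2 = x then g s else 0) / Fintype.card α := by
    rintro ⟨a', x'⟩
    by_cases hx : x' = x <;> by_cases ha : a' = a <;> simp [localResponse, hx, ha, div_eq_inv_mul]
  simp only [hsplit, sum_add_distrib, ← sum_div, sum_sub_distrib, sum_ite_eq', mem_univ, if_true]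
  congr 3
  rw [Fintype.sum_prod_type_right, sum_comm]
  simp

lemma sum_localResponse_mul_debias {g : α × ι → ℝ}
    (hg : ∀ x x', ∑ a, g (a, x) = ∑ a, g (a, x')) (a : α) (x : ι) :
    ∑ s, localResponse a x s * debias g s = g (a, x) := by
  have hA : (Fintype.card α : ℝ) ≠ 0 := by exact_mod_cast (Fintype.card_pos_iff.mpr ⟨a⟩).ne'
  have hX : (Fintype.card ι : ℝ) ≠ 0 := by exact_mod_cast (Fintype.card_pos_iff.mpr ⟨x⟩).ne'
  have htotal : ∑ s, g s = Fintype.card ι * ∑ a', g (a', x) := by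
    rw [Fintype.sum_prod_type_right, Fintype.sum_congr _ _ (fun x' => hg x' x)]
    simp
  have hmass : ∑ s, localResponse a x s = Fintype.card ι := by
    have := sum_localResponse_mul (fun _ => (1 : ℝ)) a x
    simp only [mul_one, sum_const, card_univ, Fintype.card_prod, nsmul_eq_mul] at this
    rw [this]; push_cast; field_simp; ring
  simp only [debias, mul_sub, sum_sub_distrib, ← sum_mul, sum_localResponse_mul, hmass, htotal]
  field_simp
  ring

end LocalResponse

section SignedHiddenVariables

variable {α₁ α₂ ι₁ ι₂ : Type*} [Fintype α₁] [Fintype α₂] [Fintype ι₁] [Fintype ι₂]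

noncomputable def quasiDistribution (p : α₁ → α₂ → ι₁ → ι₂ → ℝ) (s : α₁ × ι₁) (t : α₂ × ι₂) : ℝ :=
  debias (fun s' => debias (fun t' => p s'.1 t'.1 s'.2 t'.2) t) s

variable [DecidableEq α₁] [DecidableEq α₂] [DecidableEq ι₁] [DecidableEq ι₂]

theorem sum_localResponse_mul_quasiDistribution {p : α₁ → α₂ → ι₁ → ι₂ → ℝ}
    (hNS₁ : ∀ a₁ x₁ x₂ x₂', ∑ a₂, p a₁ a₂ x₁ x₂ = ∑ a₂, p a₁ a₂ x₁ x₂')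
    (hNS₂ : ∀ a₂ x₂ x₁ x₁', ∑ a₁, p a₁ a₂ x₁ x₂ = ∑ a₁, p a₁ a₂ x₁' x₂)
    (a₁ : α₁) (a₂ : α₂) (x₁ : ι₁) (x₂ : ι₂) :
    ∑ s, ∑ t, localResponse a₁ x₁ s * localResponse a₂ x₂ t * quasiDistribution p s t
      = p a₁ a₂ x₁ x₂ := by
  have hinner : ∀ t : α₂ × ι₂, ∑ s, localResponse a₁ x₁ s * quasiDistribution p s t
      = debias (fun t' => p a₁ t'.1 x₁ t'.2) t := by
    intro t
    refine sum_localResponse_mul_debias (fun x x' => ?_) a₁ x₁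
    simp only [sum_debias]
    congr 2
    funext t'
    exact hNS₂ t'.1 t'.2 x x'
  calc ∑ s, ∑ t, localResponse a₁ x₁ s * localResponse a₂ x₂ t * quasiDistribution p s t
      = ∑ t, localResponse a₂ x₂ t * ∑ s, localResponse a₁ x₁ s * quasiDistribution p s t := by
        rw [sum_comm]
        simp only [mul_sum]
        exact sum_congr rfl fun t _ => sum_congr rfl fun s _ => by ring
    _ = p a₁ a₂ x₁ x₂ := by
        simp only [hinner]
        exact sum_localResponse_mul_debias (fun y y' => hNS₁ a₁ x₁ y y') a₂ x₂

end SignedHiddenVariables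

section KroneckerTrace

variable {R m n α β : Type*} [CommSemiring R] [Fintype m] [Fintype n] [Fintype α] [Fintype β]

lemma sum_trace_kronecker_mul_right [DecidableEq n] (A : Matrix m m R) {B : α → Matrix n n R}
    (hB : ∑ a, B a = 1) (ρ : Matrix (m × n) (m × n) R) :
    ∑ a, ((A ⊗ₖ B a) * ρ).trace = ((A ⊗ₖ (1 : Matrix n n R)) * ρ).trace := by
  rw [← trace_sum, ← sum_mul, ← hB]
  congr 2
  exact (map_sum (kroneckerBilinear (R := R) A) B univ).symm

lemma sum_trace_kronecker_mul_left [DecidableEq m] {A : α → Matrix m m R} (hA : ∑ a, A a = 1)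
    (B : Matrix n n R) (ρ : Matrix (m × n) (m × n) R) :
    ∑ a, ((A a ⊗ₖ B) * ρ).trace = (((1 : Matrix m m R) ⊗ₖ B) * ρ).trace := by
  rw [← trace_sum, ← sum_mul, ← hA]
  congr 2
  exact (map_sum ((kroneckerBilinear (R := R)).flip B) A univ).symm

lemma sum_sum_trace_kronecker_mul [DecidableEq m] [DecidableEq n] {A : α → Matrix m m R}
    {B : β → Matrix n n R} (hA : ∑ a, A a = 1) (hB : ∑ b, B b = 1)
    (ρ : Matrix (m × n) (m × n) R) :
    ∑ a, ∑ b, ((A a ⊗ₖ B b) * ρ).trace = ρ.trace := by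
  simp only [sum_trace_kronecker_mul_right _ hB, sum_trace_kronecker_mul_left hA,
    one_kronecker_one, one_mul]

end KroneckerTrace

theorem nonSignalling_of_born {α₁ α₂ ι₁ ι₂ m n : Type*} [Fintype α₁] [Fintype α₂]
    [Fintype m] [Fintype n] [DecidableEq m] [DecidableEq n]
    {p : α₁ → α₂ → ι₁ → ι₂ → ℝ} (M₁ : α₁ → ι₁ → Matrix m m ℂ) (M₂ : α₂ → ι₂ → Matrix n n ℂ)
    (ρ : Matrix (m × n) (m × n) ℂ)
    (hM₁ : ∀ x₁, ∑ a₁, M₁ a₁ x₁ = 1) (hM₂ : ∀ x₂, ∑ a₂, M₂ a₂ x₂ = 1)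
    (hborn : ∀ a₁ a₂ x₁ x₂, (p a₁ a₂ x₁ x₂ : ℂ) = ((M₁ a₁ x₁ ⊗ₖ M₂ a₂ x₂) * ρ).trace) :
    (∀ a₁ x₁ x₂ x₂', ∑ a₂, p a₁ a₂ x₁ x₂ = ∑ a₂, p a₁ a₂ x₁ x₂') ∧
      (∀ a₂ x₂ x₁ x₁', ∑ a₁, p a₁ a₂ x₁ x₂ = ∑ a₁, p a₁ a₂ x₁' x₂) := by
  have hmarg₁ : ∀ a₁ x₁ x₂, ((∑ a₂, p a₁ a₂ x₁ x₂ : ℝ) : ℂ) = ((M₁ a₁ x₁ ⊗ₖ 1) * ρ).trace := by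
    intro a₁ x₁ x₂
    push_cast
    simp only [hborn, sum_trace_kronecker_mul_right _ (hM₂ x₂)]
  have hmarg₂ : ∀ a₂ x₂ x₁, ((∑ a₁, p a₁ a₂ x₁ x₂ : ℝ) : ℂ) = ((1 ⊗ₖ M₂ a₂ x₂) * ρ).trace := by
    intro a₂ x₂ x₁
    push_cast
    simp only [hborn, sum_trace_kronecker_mul_left (hM₁ x₁)]
  exact ⟨fun a₁ x₁ x₂ x₂' => by exact_mod_cast (hmarg₁ a₁ x₁ x₂).trans (hmarg₁ a₁ x₁ x₂').symm,
    fun a₂ x₂ x₁ x₁' => by exact_mod_cast (hmarg₂ a₂ x₂ x₁).trans (hmarg₂ a₂ x₂ x₁').symm⟩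

section RealDiagonal

variable {Λ Λ' n n' : Type*} [DecidableEq n] [DecidableEq n']

noncomputable def realDiagonal (e : n ≃ Λ) (w : Λ → ℝ) : Matrix n n ℂ :=
  diagonal fun j => (w (e j) : ℂ)

lemma realDiagonal_kronecker (e : n ≃ Λ) (e' : n' ≃ Λ') (u : Λ → ℝ) (v : Λ' → ℝ) :
    realDiagonal e u ⊗ₖ realDiagonal e' v
      = realDiagonal (e.prodCongr e') fun st => u st.1 * v st.2 := by
  simp [realDiagonal, diagonal_kronecker_diagonal]

lemma realDiagonal_mul [Fintype n] (e : n ≃ Λ) (u v : Λ → ℝ) :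
    realDiagonal e u * realDiagonal e v = realDiagonal e (u * v) := by
  simp [realDiagonal, diagonal_mul_diagonal]

lemma trace_realDiagonal [Fintype n] [Fintype Λ] (e : n ≃ Λ) (w : Λ → ℝ) :
    (realDiagonal e w).trace = ((∑ s, w s : ℝ) : ℂ) := by
  rw [realDiagonal, trace_diagonal, e.sum_comp (fun s => (w s : ℂ)), Complex.ofReal_sum]

lemma sum_realDiagonal {β : Type*} [Fintype β] (e : n ≃ Λ) (w : β → Λ → ℝ) :
    ∑ b, realDiagonal e (w b) = realDiagonal e (∑ b, w b) := by
  simp only [realDiagonal, ← diagonalAddMonoidHom_apply, ← map_sum]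
  congr 1
  ext j
  simp

lemma realDiagonal_one (e : n ≃ Λ) : realDiagonal e 1 = 1 := by
  simp [realDiagonal]

lemma posSemidef_realDiagonal (e : n ≃ Λ) {w : Λ → ℝ} (hw : 0 ≤ w) :
    (realDiagonal e w).PosSemidef :=
  posSemidef_diagonal_iff.mpr fun j => by exact_mod_cast hw (e j)

lemma isHermitian_realDiagonal (e : n ≃ Λ) (w : Λ → ℝ) : (realDiagonal e w).IsHermitian :=
  isHermitian_diagonal_of_self_adjoint _ (funext fun j => Complex.conj_ofReal (w (e j)))

lemma commute_realDiagonal [Fintype n] (e : n ≃ Λ) (u v : Λ → ℝ) :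
    Commute (realDiagonal e u) (realDiagonal e v) :=
  commute_diagonal _ _

end RealDiagonal

lemma sum_realDiagonal_localResponse {α ι n : Type*} [Fintype α] [DecidableEq α] [DecidableEq ι]
    [DecidableEq n] (e : n ≃ α × ι) (x : ι) : ∑ a, realDiagonal e (localResponse a x) = 1 := by
  rw [sum_realDiagonal, ← realDiagonal_one e]
  congr 1
  ext s
  simp [sum_localResponse]

theorem exists_diagonal_born_model_of_nonSignalling {α₁ α₂ ι₁ ι₂ : Type*}
    [Fintype α₁] [Fintype α₂] [Fintype ι₁] [Fintype ι₂]
    [DecidableEq α₁] [DecidableEq α₂] [DecidableEq ι₁] [DecidableEq ι₂]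
    [Nonempty ι₁] [Nonempty ι₂] {p : α₁ → α₂ → ι₁ → ι₂ → ℝ}
    (hnorm : ∀ x₁ x₂, ∑ a₁, ∑ a₂, p a₁ a₂ x₁ x₂ = 1)
    (hNS₁ : ∀ a₁ x₁ x₂ x₂', ∑ a₂, p a₁ a₂ x₁ x₂ = ∑ a₂, p a₁ a₂ x₁ x₂')
    (hNS₂ : ∀ a₂ x₂ x₁ x₁', ∑ a₁, p a₁ a₂ x₁ x₂ = ∑ a₁, p a₁ a₂ x₁' x₂) :
    ∃ (d₁ d₂ : ℕ)
      (M₁ : α₁ → ι₁ → Matrix (Fin d₁) (Fin d₁) ℂ)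
      (M₂ : α₂ → ι₂ → Matrix (Fin d₂) (Fin d₂) ℂ)
      (ρ : Matrix (Fin d₁ × Fin d₂) (Fin d₁ × Fin d₂) ℂ),
      (∀ a₁ x₁, (M₁ a₁ x₁).PosSemidef) ∧
      (∀ a₂ x₂, (M₂ a₂ x₂).PosSemidef) ∧
      (∀ x₁, ∑ a₁, M₁ a₁ x₁ = 1) ∧
      (∀ x₂, ∑ a₂, M₂ a₂ x₂ = 1) ∧
      ρ.IsHermitian ∧ ρ.trace = 1 ∧
      (∀ a₁ a₂ x₁ x₂ a₁' a₂' x₁' x₂',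
        Commute (M₁ a₁ x₁ ⊗ₖ M₂ a₂ x₂) (M₁ a₁' x₁' ⊗ₖ M₂ a₂' x₂')) ∧
      (∀ a₁ a₂ x₁ x₂, Commute (M₁ a₁ x₁ ⊗ₖ M₂ a₂ x₂) ρ) ∧
      (∀ a₁ a₂ x₁ x₂,
        (p a₁ a₂ x₁ x₂ : ℂ) = ((M₁ a₁ x₁ ⊗ₖ M₂ a₂ x₂) * ρ).trace) := by
  set e₁ := (Fintype.equivFin (α₁ × ι₁)).symm
  set e₂ := (Fintype.equivFin (α₂ × ι₂)).symm
  set ρ := realDiagonal (e₁.prodCongr e₂) fun st => quasiDistribution p st.1 st.2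
  have hborn : ∀ a₁ a₂ x₁ x₂, (p a₁ a₂ x₁ x₂ : ℂ)
      = ((realDiagonal e₁ (localResponse a₁ x₁) ⊗ₖ realDiagonal e₂ (localResponse a₂ x₂))
          * ρ).trace := by
    intro a₁ a₂ x₁ x₂
    rw [realDiagonal_kronecker, realDiagonal_mul, trace_realDiagonal, Fintype.sum_prod_type,
      ← sum_localResponse_mul_quasiDistribution hNS₁ hNS₂ a₁ a₂ x₁ x₂]
    rfl
  have hPOVM₁ := sum_realDiagonal_localResponse (α := α₁) e₁
  have hPOVM₂ := sum_realDiagonal_localResponse (α := α₂) e₂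
  obtain ⟨x₁⟩ := ‹Nonempty ι₁›
  obtain ⟨x₂⟩ := ‹Nonempty ι₂›
  refine ⟨_, _, fun a x => realDiagonal e₁ (localResponse a x),
    fun a x => realDiagonal e₂ (localResponse a x), ρ,
    fun a x => posSemidef_realDiagonal _ (localResponse_nonneg a x),
    fun a x => posSemidef_realDiagonal _ (localResponse_nonneg a x),
    hPOVM₁, hPOVM₂, isHermitian_realDiagonal _ _, ?_, fun _ _ _ _ _ _ _ _ => ?_,
    fun _ _ _ _ => ?_, hborn⟩
  · rw [← sum_sum_trace_kronecker_mul (hPOVM₁ x₁) (hPOVM₂ x₂) ρ]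
    simp only [← hborn]
    exact_mod_cast hnorm x₁ x₂
  · simp only [realDiagonal_kronecker]
    exact commute_realDiagonal _ _ _
  · simp only [realDiagonal_kronecker]
    exact commute_realDiagonal _ _ _

theorem stmt8_general {A₁ A₂ X₁ X₂ : ℕ}
    (hX₁ : 1 ≤ X₁) (hX₂ : 1 ≤ X₂)
    (p : Fin A₁ → Fin A₂ → Fin X₁ → Fin X₂ → ℝ)
    (hnorm : ∀ x₁ x₂, ∑ a₁, ∑ a₂, p a₁ a₂ x₁ x₂ = 1) :
    ((∀ a₁ x₁ x₂ x₂', ∑ a₂, p a₁ a₂ x₁ x₂ = ∑ a₂, p a₁ a₂ x₁ x₂') ∧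
     (∀ a₂ x₂ x₁ x₁', ∑ a₁, p a₁ a₂ x₁ x₂ = ∑ a₁, p a₁ a₂ x₁' x₂)) ↔
    ∃ (d₁ d₂ : ℕ)
      (M₁ : Fin A₁ → Fin X₁ → Matrix (Fin d₁) (Fin d₁) ℂ)
      (M₂ : Fin A₂ → Fin X₂ → Matrix (Fin d₂) (Fin d₂) ℂ)
      (ρ : Matrix (Fin d₁ × Fin d₂) (Fin d₁ × Fin d₂) ℂ),
      (∀ a₁ x₁, (M₁ a₁ x₁).PosSemidef) ∧
      (∀ a₂ x₂, (M₂ a₂ x₂).PosSemidef) ∧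
      (∀ x₁, ∑ a₁, M₁ a₁ x₁ = 1) ∧
      (∀ x₂, ∑ a₂, M₂ a₂ x₂ = 1) ∧
      ρ.IsHermitian ∧ ρ.trace = 1 ∧
      (∀ a₁ a₂ x₁ x₂ a₁' a₂' x₁' x₂',
        Commute (M₁ a₁ x₁ ⊗ₖ M₂ a₂ x₂) (M₁ a₁' x₁' ⊗ₖ M₂ a₂' x₂')) ∧
      (∀ a₁ a₂ x₁ x₂, Commute (M₁ a₁ x₁ ⊗ₖ M₂ a₂ x₂) ρ) ∧
      (∀ a₁ a₂ x₁ x₂,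
        (p a₁ a₂ x₁ x₂ : ℂ) = ((M₁ a₁ x₁ ⊗ₖ M₂ a₂ x₂) * ρ).trace) := by
  have : Nonempty (Fin X₁) := ⟨⟨0, hX₁⟩⟩
  have : Nonempty (Fin X₂) := ⟨⟨0, hX₂⟩⟩
  constructor
  · rintro ⟨hNS₁, hNS₂⟩
    exact exists_diagonal_born_model_of_nonSignalling hnorm hNS₁ hNS₂
  · rintro ⟨_, _, M₁, M₂, ρ, -, -, hM₁, hM₂, -, -, -, -, hborn⟩
    exact nonSignalling_of_born M₁ M₂ ρ hM₁ hM₂ hborn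

/-- Corollary 2 (bipartite): p is non-signalling iff it arises from the Born rule with
genuine POVM elements and a Hermitian (possibly non-positive) unit-trace operator,
with all operators commuting. -/
theorem stmt8 {A₁ A₂ X₁ X₂ : ℕ}
    (hA₁ : 1 ≤ A₁) (hA₂ : 1 ≤ A₂) (hX₁ : 1 ≤ X₁) (hX₂ : 1 ≤ X₂)
    (p : Fin A₁ → Fin A₂ → Fin X₁ → Fin X₂ → ℝ)
    (hp0 : ∀ a₁ a₂ x₁ x₂, 0 ≤ p a₁ a₂ x₁ x₂)
    (hnorm : ∀ x₁ x₂, ∑ a₁, ∑ a₂, p a₁ a₂ x₁ x₂ = 1) :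
    ((∀ a₁ x₁ x₂ x₂', ∑ a₂, p a₁ a₂ x₁ x₂ = ∑ a₂, p a₁ a₂ x₁ x₂') ∧
     (∀ a₂ x₂ x₁ x₁', ∑ a₁, p a₁ a₂ x₁ x₂ = ∑ a₁, p a₁ a₂ x₁' x₂)) ↔
    ∃ (d₁ d₂ : ℕ)
      (M₁ : Fin A₁ → Fin X₁ → Matrix (Fin d₁) (Fin d₁) ℂ)
      (M₂ : Fin A₂ → Fin X₂ → Matrix (Fin d₂) (Fin d₂) ℂ)
      (ρ : Matrix (Fin d₁ × Fin d₂) (Fin d₁ × Fin d₂) ℂ),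
      (∀ a₁ x₁, (M₁ a₁ x₁).PosSemidef) ∧
      (∀ a₂ x₂, (M₂ a₂ x₂).PosSemidef) ∧
      (∀ x₁, ∑ a₁, M₁ a₁ x₁ = 1) ∧
      (∀ x₂, ∑ a₂, M₂ a₂ x₂ = 1) ∧
      ρ.IsHermitian ∧ ρ.trace = 1 ∧
      (∀ a₁ a₂ x₁ x₂ a₁' a₂' x₁' x₂',
        Commute (M₁ a₁ x₁ ⊗ₖ M₂ a₂ x₂) (M₁ a₁' x₁' ⊗ₖ M₂ a₂' x₂')) ∧
      (∀ a₁ a₂ x₁ x₂, Commute (M₁ a₁ x₁ ⊗ₖ M₂ a₂ x₂) ρ) ∧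
      (∀ a₁ a₂ x₁ x₂,
        (p a₁ a₂ x₁ x₂ : ℂ) = ((M₁ a₁ x₁ ⊗ₖ M₂ a₂ x₂) * ρ).trace) :=
  stmt8_general hX₁ hX₂ p hnorm
end

section
/- Let p̃ and p̃' be N-partite non-signalling conditional quasiprobability distributions on outcomes ∏ₖ Fin Aₖ given inputs ∏ₖ Fin Xₖ. Suppose for every subset S ⊆ Fin N and every choice of outcomes a_i < Aᵢ−1 for i ∈ S and inputs x_i for i ∈ S, the marginals agree: p̃(a_S|x_S) = p̃'(a_S|x_S). Then p̃ = p̃'. -/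
/-!
A cylinder sum `∑_{b_S = a_S} f b` in which `a_k` is the last outcome at some `k ∈ S` equals the
cylinder sum over `S \ {k}` minus the cylinder sums in which `a_k` is replaced by the other
outcomes. Each of these has fewer last outcomes, so by induction on their number every cylinder
sum, and in particular (with `S` everything) every value of `f`, is determined by the cylinder
sums that avoid last outcomes.
-/

open Finset

namespace Function

variable {ι : Type*} [Fintype ι] [DecidableEq ι] {α : ι → Type*} [∀ i, Fintype (α i)]
  [∀ i, DecidableEq (α i)] {M : Type*} [AddCommGroup M]

def cylinder (S : Finset ι) (a : ∀ i, α i) : Finset (∀ i, α i) :=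
  univ.filter fun b => ∀ i ∈ S, b i = a i

theorem cylinder_univ (a : ∀ i, α i) : cylinder univ a = {a} := by
  ext b
  simp [cylinder, funext_iff]

theorem sum_cylinder_erase (f : (∀ i, α i) → M) {S : Finset ι} {k : ι} (hk : k ∈ S)
    (a : ∀ i, α i) :
    ∑ b ∈ cylinder (S.erase k) a, f b = ∑ c, ∑ b ∈ cylinder S (update a k c), f b := by
  rw [← sum_fiberwise (cylinder (S.erase k) a) (fun b => b k) f]
  refine sum_congr rfl fun c _ => sum_congr ?_ fun _ _ => rfl
  ext b
  simp only [cylinder, mem_filter, mem_univ, true_and, mem_erase]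
  constructor
  · rintro ⟨hb, rfl⟩ i hi
    rcases eq_or_ne i k with rfl | hik
    · simp
    · simp [hik, hb i ⟨hik, hi⟩]
  · intro hb
    exact ⟨fun i ⟨hik, hi⟩ => by simpa [hik] using hb i hi, by simpa using hb k hk⟩

theorem eq_zero_of_sum_cylinder_eq_zero {P : ∀ i, α i → Prop}
    (hP : ∀ i, {c | ¬ P i c}.Subsingleton) {f : (∀ i, α i) → M}
    (hf : ∀ S a, (∀ i ∈ S, P i (a i)) → ∑ b ∈ cylinder S a, f b = 0) : f = 0 := by
  classical
  let lastSites (S : Finset ι) (a : ∀ i, α i) := S.filter fun i => ¬ P i (a i)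
  suffices h : ∀ n S a, #(lastSites S a) = n → ∑ b ∈ cylinder S a, f b = 0 by
    funext a
    simpa [cylinder_univ] using h _ univ a rfl
  intro n
  induction n using Nat.strong_induction_on with
  | _ n ih =>
  intro S a hn
  obtain ⟨k, hk⟩ | hgood := (lastSites S a).eq_empty_or_nonempty.symm
  · have hkS : k ∈ S := (mem_filter.mp hk).1
    have hcard : #((lastSites S a).erase k) < n := hn ▸ card_erase_lt_of_mem hk
    have herase : ∑ b ∈ cylinder (S.erase k) a, f b = 0 :=
      ih _ hcard _ _ (by rw [← filter_erase])
    have hupdate : ∀ c ≠ a k, ∑ b ∈ cylinder S (update a k c), f b = 0 := by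
      intro c hc
      have hPc : P k c := by_contra fun h => hc (hP k h (mem_filter.mp hk).2)
      refine ih _ hcard _ _ (congrArg card ?_)
      ext i
      rcases eq_or_ne i k with rfl | hik
      · simp [lastSites, hPc]
      · simp [lastSites, hik]
    rwa [sum_cylinder_erase f hkS, Fintype.sum_eq_single (a k) hupdate, update_eq_self] at herase
  · exact hf S a fun i hi => by_contra fun h => notMem_empty i (hgood ▸ mem_filter.mpr ⟨hi, h⟩)

theorem eq_of_sum_cylinder_eq {P : ∀ i, α i → Prop} (hP : ∀ i, {c | ¬ P i c}.Subsingleton)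
    {f g : (∀ i, α i) → M}
    (hfg : ∀ S a, (∀ i ∈ S, P i (a i)) → ∑ b ∈ cylinder S a, f b = ∑ b ∈ cylinder S a, g b) :
    f = g :=
  sub_eq_zero.mp <| eq_zero_of_sum_cylinder_eq_zero hP fun S a ha => by
    simp [sum_sub_distrib, hfg S a ha]

end Function

theorem stmt10_general {N : ℕ} {A X : Fin N → ℕ}
    (p q : (∀ k, Fin (A k)) → (∀ k, Fin (X k)) → ℝ)
    (hmarg : ∀ (S : Finset (Fin N)) (a : ∀ j, Fin (A j)) (x : ∀ j, Fin (X j)),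
      (∀ i ∈ S, ((a i : ℕ) < A i - 1)) →
      ∑ b ∈ Finset.univ.filter (fun b : ∀ j, Fin (A j) => ∀ i ∈ S, b i = a i), p b x =
      ∑ b ∈ Finset.univ.filter (fun b : ∀ j, Fin (A j) => ∀ i ∈ S, b i = a i), q b x) :
    p = q := by
  funext a x
  have hlast : ∀ i, {c : Fin (A i) | ¬ (c : ℕ) < A i - 1}.Subsingleton :=
    fun i c hc c' hc' => Fin.ext (by simp only [Set.mem_ofPred_eq] at hc hc'; omega)
  -- `hmarg` decides `∀ i ∈ S, _` through `Nat.decidableForallFin`, `cylinder` through a `Fintype`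
  have hmarg' : ∀ S a, (∀ i ∈ S, ((a i : ℕ) < A i - 1)) →
      ∑ b ∈ Function.cylinder S a, p b x = ∑ b ∈ Function.cylinder S a, q b x :=
    fun S a ha => by convert hmarg S a x ha using 2 <;> exact filter_congr_decidable ..
  exact congrFun (Function.eq_of_sum_cylinder_eq hlast hmarg') a

/-- Lemma 1 (N-partite): two non-signalling conditional quasiprobability
distributions agreeing on all marginals with non-maximal outcomes are equal. -/
theorem stmt10 {N : ℕ} {A X : Fin N → ℕ}
    (p q : (∀ k, Fin (A k)) → (∀ k, Fin (X k)) → ℝ)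
    (hpnorm : ∀ x, ∑ a, p a x = 1) (hqnorm : ∀ x, ∑ a, q a x = 1)
    (hpNS : ∀ (k : Fin N) (a : ∀ j, Fin (A j)) (x x' : ∀ j, Fin (X j)),
      (∀ j, j ≠ k → x j = x' j) →
      ∑ b : Fin (A k), p (Function.update a k b) x =
      ∑ b : Fin (A k), p (Function.update a k b) x')
    (hqNS : ∀ (k : Fin N) (a : ∀ j, Fin (A j)) (x x' : ∀ j, Fin (X j)),
      (∀ j, j ≠ k → x j = x' j) →
      ∑ b : Fin (A k), q (Function.update a k b) x =
      ∑ b : Fin (A k), q (Function.update a k b) x')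
    (hmarg : ∀ (S : Finset (Fin N)) (a : ∀ j, Fin (A j)) (x : ∀ j, Fin (X j)),
      (∀ i ∈ S, ((a i : ℕ) < A i - 1)) →
      ∑ b ∈ Finset.univ.filter (fun b : ∀ j, Fin (A j) => ∀ i ∈ S, b i = a i), p b x =
      ∑ b ∈ Finset.univ.filter (fun b : ∀ j, Fin (A j) => ∀ i ∈ S, b i = a i), q b x) :
    p = q :=
  stmt10_general p q hmarg
end

section
/- Any non-signalling bipartite conditional probability distribution p(a₁,a₂|x₁,x₂) lies in the affine hull of the product conditional probability distributions: there exist finitely many product distributions q_j(a₁,a₂|x₁,x₂) = q_j¹(a₁|x₁)·q_j²(a₂|x₂) (with each q_jᵏ a conditional probability distribution) and real coefficients c_j with ∑_j c_j = 1 such that p = ∑_j c_j q_j. -/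
/-!
Let `p₁, p₂` be the marginals of `p`, which are well defined by no-signalling. Then
`Δ = p - p₁ ⊗ p₂` has vanishing marginals on both sides, and such a `Δ` is a linear combination
of the tensors `(u₁ - p₁) ⊗ (u₂ - p₂)`, where `uₖ` is `pₖ` with a single column replaced by a
deterministic answer. Each `(u₁ - p₁) ⊗ (u₂ - p₂)` is an alternating sum of four product
distributions, so it lies in their vector span; hence `p = p₁ ⊗ p₂ + Δ` lies in their affine span.
-/

open Finset

def IsCondDist {α ι : Type*} [Fintype α] (q : α → ι → ℝ) : Prop :=
  (∀ a x, 0 ≤ q a x) ∧ ∀ x, ∑ a, q a x = 1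

section UpdateColumn

variable {α ι : Type*} [DecidableEq α] [DecidableEq ι]

def updateColumn (r : α → ι → ℝ) (x : ι) (a : α) : α → ι → ℝ :=
  fun a' x' => if x' = x then (if a' = a then 1 else 0) else r a' x'

theorem IsCondDist.updateColumn [Fintype α] {r : α → ι → ℝ} (hr : IsCondDist r) (x : ι) (a : α) :
    IsCondDist (updateColumn r x a) := by
  refine ⟨fun a' x' => ?_, fun x' => ?_⟩ <;> unfold _root_.updateColumn
  · split_ifs <;> simp [hr.1]
  · split_ifs <;> simp [hr.2]

theorem updateColumn_sub_apply (r : α → ι → ℝ) (x : ι) (a a' : α) (x' : ι) :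
    (updateColumn r x a - r) a' x' = if x' = x then (if a' = a then 1 else 0) - r a' x' else 0 := by
  simp only [updateColumn, Pi.sub_apply]
  split_ifs <;> simp

end UpdateColumn

theorem sum_mul_ite_sub_eq {α : Type*} [Fintype α] [DecidableEq α] {f : α → ℝ} (hf : ∑ a, f a = 0)
    (b : α) (t : ℝ) : ∑ a, f a * ((if b = a then 1 else 0) - t) = f b := by
  simp [mul_sub, ← sum_mul, hf]

theorem exists_fin_sum_smul_of_mem_affineSpan_range {ι V : Type*} [AddCommGroup V] [Module ℝ V]
    {v : ι → V} {w : V} (h : w ∈ affineSpan ℝ (Set.range v)) :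
    ∃ (J : ℕ) (c : Fin J → ℝ) (i : Fin J → ι), ∑ j, c j = 1 ∧ w = ∑ j, c j • v (i j) := by
  obtain ⟨s, c, hc, rfl⟩ := eq_affineCombination_of_mem_affineSpan h
  let e := s.equivFin.symm
  refine ⟨s.card, fun j => c (e j), fun j => e j, ?_, ?_⟩
  · rw [Equiv.sum_comp e fun i => c i, sum_coe_sort s c, hc]
  · rw [s.affineCombination_eq_linear_combination v c hc, Equiv.sum_comp e fun i => c i • v i,
      sum_coe_sort s fun i => c i • v i]

section Bipartite

variable {α₁ α₂ ι₁ ι₂ : Type*}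

def condProd (q₁ : α₁ → ι₁ → ℝ) (q₂ : α₂ → ι₂ → ℝ) : α₁ → α₂ → ι₁ → ι₂ → ℝ :=
  fun a₁ a₂ x₁ x₂ => q₁ a₁ x₁ * q₂ a₂ x₂

variable [Fintype α₁] [Fintype α₂]

variable (α₁ α₂ ι₁ ι₂) in
def productBehaviours : Set (α₁ → α₂ → ι₁ → ι₂ → ℝ) :=
  Set.range fun q : {q₁ : α₁ → ι₁ → ℝ // IsCondDist q₁} × {q₂ : α₂ → ι₂ → ℝ // IsCondDist q₂} =>
    condProd q.1.1 q.2.1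

theorem condProd_mem_productBehaviours {q₁ : α₁ → ι₁ → ℝ} {q₂ : α₂ → ι₂ → ℝ}
    (hq₁ : IsCondDist q₁) (hq₂ : IsCondDist q₂) :
    condProd q₁ q₂ ∈ productBehaviours α₁ α₂ ι₁ ι₂ :=
  ⟨(⟨q₁, hq₁⟩, ⟨q₂, hq₂⟩), rfl⟩

theorem condProd_sub_sub_mem_vectorSpan {q₁ q₁' : α₁ → ι₁ → ℝ} {q₂ q₂' : α₂ → ι₂ → ℝ}
    (hq₁ : IsCondDist q₁) (hq₁' : IsCondDist q₁') (hq₂ : IsCondDist q₂) (hq₂' : IsCondDist q₂') :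
    condProd (q₁ - q₁') (q₂ - q₂') ∈ vectorSpan ℝ (productBehaviours α₁ α₂ ι₁ ι₂) := by
  have expand : condProd (q₁ - q₁') (q₂ - q₂') =
      (condProd q₁ q₂ - condProd q₁' q₂) - (condProd q₁ q₂' - condProd q₁' q₂') := by
    funext; simp only [condProd, Pi.sub_apply]; ring
  rw [expand]
  exact sub_mem
    (vsub_mem_vectorSpan ℝ (condProd_mem_productBehaviours hq₁ hq₂)
      (condProd_mem_productBehaviours hq₁' hq₂))
    (vsub_mem_vectorSpan ℝ (condProd_mem_productBehaviours hq₁ hq₂')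
      (condProd_mem_productBehaviours hq₁' hq₂'))

variable [Fintype ι₁] [Fintype ι₂] [DecidableEq α₁] [DecidableEq α₂] [DecidableEq ι₁]
  [DecidableEq ι₂]

theorem eq_sum_smul_condProd_of_marginals_eq_zero (r₁ : α₁ → ι₁ → ℝ) (r₂ : α₂ → ι₂ → ℝ)
    {Δ : α₁ → α₂ → ι₁ → ι₂ → ℝ} (h₁ : ∀ a₂ x₁ x₂, ∑ a₁, Δ a₁ a₂ x₁ x₂ = 0)
    (h₂ : ∀ a₁ x₁ x₂, ∑ a₂, Δ a₁ a₂ x₁ x₂ = 0) :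
    Δ = ∑ a₁, ∑ a₂, ∑ x₁, ∑ x₂,
      Δ a₁ a₂ x₁ x₂ • condProd (updateColumn r₁ x₁ a₁ - r₁) (updateColumn r₂ x₂ a₂ - r₂) := by
  funext b₁ b₂ y₁ y₂
  have inner (a₁ : α₁) : ∑ a₂, Δ a₁ a₂ y₁ y₂ *
      (((if b₁ = a₁ then 1 else 0) - r₁ b₁ y₁) * ((if b₂ = a₂ then 1 else 0) - r₂ b₂ y₂)) =
      ((if b₁ = a₁ then 1 else 0) - r₁ b₁ y₁) * Δ a₁ b₂ y₁ y₂ := by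
    rw [← sum_mul_ite_sub_eq (h₂ a₁ y₁ y₂) b₂ (r₂ b₂ y₂), mul_sum]
    exact sum_congr rfl fun _ _ => by ring
  simp only [Finset.sum_apply, Pi.smul_apply, smul_eq_mul, condProd, updateColumn_sub_apply,
    ite_mul, mul_ite, zero_mul, mul_zero, sum_ite_eq, mem_univ, if_true, inner]
  rw [← sum_mul_ite_sub_eq (h₁ b₂ y₁ y₂) b₁ (r₁ b₁ y₁)]
  exact sum_congr rfl fun _ _ => by ring

theorem mem_affineSpan_productBehaviours {p : α₁ → α₂ → ι₁ → ι₂ → ℝ}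
    {p₁ : α₁ → ι₁ → ℝ} {p₂ : α₂ → ι₂ → ℝ} (hp₁ : IsCondDist p₁) (hp₂ : IsCondDist p₂)
    (hm₁ : ∀ a₁ x₁ x₂, ∑ a₂, p a₁ a₂ x₁ x₂ = p₁ a₁ x₁)
    (hm₂ : ∀ a₂ x₁ x₂, ∑ a₁, p a₁ a₂ x₁ x₂ = p₂ a₂ x₂) :
    p ∈ affineSpan ℝ (productBehaviours α₁ α₂ ι₁ ι₂) := by
  set Δ := p - condProd p₁ p₂
  have hΔ₁ (a₂ : α₂) (x₁ : ι₁) (x₂ : ι₂) : ∑ a₁, Δ a₁ a₂ x₁ x₂ = 0 := by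
    simp only [Δ, Pi.sub_apply, condProd, sum_sub_distrib, hm₂, ← sum_mul, hp₁.2, one_mul,
      sub_self]
  have hΔ₂ (a₁ : α₁) (x₁ : ι₁) (x₂ : ι₂) : ∑ a₂, Δ a₁ a₂ x₁ x₂ = 0 := by
    simp only [Δ, Pi.sub_apply, condProd, sum_sub_distrib, hm₁, ← mul_sum, hp₂.2, mul_one,
      sub_self]
  have hΔ : Δ ∈ (affineSpan ℝ (productBehaviours α₁ α₂ ι₁ ι₂)).direction := by
    rw [direction_affineSpan, eq_sum_smul_condProd_of_marginals_eq_zero p₁ p₂ hΔ₁ hΔ₂]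
    refine sum_mem fun a₁ _ => sum_mem fun a₂ _ => sum_mem fun x₁ _ => sum_mem fun x₂ _ => ?_
    exact Submodule.smul_mem _ _ (condProd_sub_sub_mem_vectorSpan (hp₁.updateColumn x₁ a₁) hp₁
      (hp₂.updateColumn x₂ a₂) hp₂)
  have hbase := mem_affineSpan ℝ (condProd_mem_productBehaviours hp₁ hp₂)
  simpa [Δ] using AffineSubspace.vadd_mem_of_mem_direction hΔ hbase

end Bipartite

theorem stmt12_general {A₁ A₂ X₁ X₂ : ℕ}
    (hX₁ : 1 ≤ X₁) (hX₂ : 1 ≤ X₂)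
    (p : Fin A₁ → Fin A₂ → Fin X₁ → Fin X₂ → ℝ)
    (hp0 : ∀ a₁ a₂ x₁ x₂, 0 ≤ p a₁ a₂ x₁ x₂)
    (hnorm : ∀ x₁ x₂, ∑ a₁, ∑ a₂, p a₁ a₂ x₁ x₂ = 1)
    (hNS2 : ∀ a₁ x₁ x₂ x₂', ∑ a₂, p a₁ a₂ x₁ x₂ = ∑ a₂, p a₁ a₂ x₁ x₂')
    (hNS1 : ∀ a₂ x₂ x₁ x₁', ∑ a₁, p a₁ a₂ x₁ x₂ = ∑ a₁, p a₁ a₂ x₁' x₂) :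
    ∃ (J : ℕ) (c : Fin J → ℝ)
      (q₁ : Fin J → Fin A₁ → Fin X₁ → ℝ) (q₂ : Fin J → Fin A₂ → Fin X₂ → ℝ),
      (∀ j a₁ x₁, 0 ≤ q₁ j a₁ x₁) ∧ (∀ j a₂ x₂, 0 ≤ q₂ j a₂ x₂) ∧
      (∀ j x₁, ∑ a₁, q₁ j a₁ x₁ = 1) ∧ (∀ j x₂, ∑ a₂, q₂ j a₂ x₂ = 1) ∧
      (∑ j, c j = 1) ∧
      (∀ a₁ a₂ x₁ x₂, p a₁ a₂ x₁ x₂ = ∑ j, c j * (q₁ j a₁ x₁ * q₂ j a₂ x₂)) := by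
  let p₁ : Fin A₁ → Fin X₁ → ℝ := fun a₁ x₁ => ∑ a₂, p a₁ a₂ x₁ ⟨0, hX₂⟩
  let p₂ : Fin A₂ → Fin X₂ → ℝ := fun a₂ x₂ => ∑ a₁, p a₁ a₂ ⟨0, hX₁⟩ x₂
  have hp₁ : IsCondDist p₁ :=
    ⟨fun _ _ => sum_nonneg fun _ _ => hp0 _ _ _ _, fun x₁ => hnorm x₁ _⟩
  have hp₂ : IsCondDist p₂ :=
    ⟨fun _ _ => sum_nonneg fun _ _ => hp0 _ _ _ _, fun x₂ => by rw [sum_comm]; exact hnorm _ x₂⟩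
  obtain ⟨J, c, q, hc, hpq⟩ := exists_fin_sum_smul_of_mem_affineSpan_range
    (mem_affineSpan_productBehaviours hp₁ hp₂ (fun a₁ x₁ x₂ => hNS2 a₁ x₁ x₂ _)
      (fun a₂ x₁ x₂ => hNS1 a₂ x₂ x₁ _))
  refine ⟨J, c, fun j => (q j).1.1, fun j => (q j).2.1, fun j => (q j).1.2.1,
    fun j => (q j).2.2.1, fun j => (q j).1.2.2, fun j => (q j).2.2.2, hc, fun a₁ a₂ x₁ x₂ => ?_⟩
  rw [hpq]
  simp only [Finset.sum_apply, Pi.smul_apply, smul_eq_mul, condProd]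

/-- Any non-signalling bipartite conditional probability distribution lies in the
affine hull of the product conditional probability distributions. -/
theorem stmt12 {A₁ A₂ X₁ X₂ : ℕ}
    (hA₁ : 1 ≤ A₁) (hA₂ : 1 ≤ A₂) (hX₁ : 1 ≤ X₁) (hX₂ : 1 ≤ X₂)
    (p : Fin A₁ → Fin A₂ → Fin X₁ → Fin X₂ → ℝ)
    (hp0 : ∀ a₁ a₂ x₁ x₂, 0 ≤ p a₁ a₂ x₁ x₂)
    (hnorm : ∀ x₁ x₂, ∑ a₁, ∑ a₂, p a₁ a₂ x₁ x₂ = 1)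
    (hNS2 : ∀ a₁ x₁ x₂ x₂', ∑ a₂, p a₁ a₂ x₁ x₂ = ∑ a₂, p a₁ a₂ x₁ x₂')
    (hNS1 : ∀ a₂ x₂ x₁ x₁', ∑ a₁, p a₁ a₂ x₁ x₂ = ∑ a₁, p a₁ a₂ x₁' x₂) :
    ∃ (J : ℕ) (c : Fin J → ℝ)
      (q₁ : Fin J → Fin A₁ → Fin X₁ → ℝ) (q₂ : Fin J → Fin A₂ → Fin X₂ → ℝ),
      (∀ j a₁ x₁, 0 ≤ q₁ j a₁ x₁) ∧ (∀ j a₂ x₂, 0 ≤ q₂ j a₂ x₂) ∧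
      (∀ j x₁, ∑ a₁, q₁ j a₁ x₁ = 1) ∧ (∀ j x₂, ∑ a₂, q₂ j a₂ x₂ = 1) ∧
      (∑ j, c j = 1) ∧
      (∀ a₁ a₂ x₁ x₂, p a₁ a₂ x₁ x₂ = ∑ j, c j * (q₁ j a₁ x₁ * q₂ j a₂ x₂)) :=
  stmt12_general hX₁ hX₂ p hp0 hnorm hNS2 hNS1
end

section
/- The number of free real parameters of a bipartite non-signalling conditional probability distribution with Aₖ outcomes and Xₖ inputs per site (k = 1,2) is at most ((A₁−1)X₁+1)·((A₂−1)X₂+1) − 1: the map sending a non-signalling distribution p to the tuple of values (p(a₁,a₂|x₁,x₂) for a₁<A₁−1, a₂<A₂−1; marginals p(a₁|x₁) for a₁<A₁−1; marginals p(a₂|x₂) for a₂<A₂−1) is injective on the set of non-signalling conditional quasiprobability distributions. -/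
/-! For fixed inputs, a non-signalling distribution is an `A₁ × A₂` table whose total sum is
known, whose row and column sums are the marginals, and which by non-signalling do not depend
on the other party's input. A table with known total and known sums of all rows and columns but
the last is determined by its upper-left `(A₁ - 1) × (A₂ - 1)` block: each missing row or column
sum is the total minus the known ones, and each missing entry is a line sum minus the known
entries of that line. -/

namespace Fin

variable {M : Type*} [AddCommGroup M]

theorem eq_of_sum_eq_of_forall_lt_pred {n : ℕ} {f g : Fin n → M}
    (hsum : ∑ i, f i = ∑ i, g i) (h : ∀ i : Fin n, (i : ℕ) < n - 1 → f i = g i) : f = g := by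
  funext i
  by_cases hi : (i : ℕ) < n - 1
  · exact h i hi
  · have hdiff : ∑ j, (f j - g j) = f i - g i :=
      Finset.sum_eq_single i
        (fun j _ hji => sub_eq_zero.mpr (h j (by have := Fin.val_ne_of_ne hji; omega)))
        (fun hi' => absurd (Finset.mem_univ i) hi')
    rw [Finset.sum_sub_distrib, hsum, sub_self] at hdiff
    exact sub_eq_zero.mp hdiff.symm

theorem eq_of_sum_eq_of_marginals_eq {m n : ℕ} {f g : Fin m → Fin n → M}
    (hsum : ∑ i, ∑ j, f i j = ∑ i, ∑ j, g i j)
    (hrow : ∀ i : Fin m, (i : ℕ) < m - 1 → ∑ j, f i j = ∑ j, g i j)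
    (hcol : ∀ j : Fin n, (j : ℕ) < n - 1 → ∑ i, f i j = ∑ i, g i j)
    (hentry : ∀ (i : Fin m) (j : Fin n), (i : ℕ) < m - 1 → (j : ℕ) < n - 1 → f i j = g i j) : f = g := by
  have hcol_all : ∀ j, ∑ i, f i j = ∑ i, g i j :=
    congr_fun <| eq_of_sum_eq_of_forall_lt_pred (f := fun j => ∑ i, f i j)
      (g := fun j => ∑ i, g i j) (by rw [Finset.sum_comm, hsum, Finset.sum_comm]) hcol
  have hrows : ∀ i : Fin m, (i : ℕ) < m - 1 → f i = g i := fun i hi =>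
    eq_of_sum_eq_of_forall_lt_pred (hrow i hi) (hentry i · hi)
  funext i j
  exact congr_fun (eq_of_sum_eq_of_forall_lt_pred (f := (f · j)) (g := (g · j))
    (hcol_all j) (fun i hi => congr_fun (hrows i hi) j)) i

end Fin

/-- The map sending a non-signalling conditional quasiprobability distribution to
its restricted values and marginals is injective on the set of non-signalling
distributions; hence there are at most ((A₁−1)X₁+1)((A₂−1)X₂+1) − 1 free
parameters. -/
theorem stmt19 {A₁ A₂ X₁ X₂ : ℕ} (hX₁ : 1 ≤ X₁) (hX₂ : 1 ≤ X₂) :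
    Set.InjOn
      (fun p : Fin A₁ → Fin A₂ → Fin X₁ → Fin X₂ → ℝ =>
        (fun (a₁ : Fin A₁) (a₂ : Fin A₂) (x₁ : Fin X₁) (x₂ : Fin X₂) =>
            if (a₁ : ℕ) < A₁ - 1 ∧ (a₂ : ℕ) < A₂ - 1 then p a₁ a₂ x₁ x₂ else 0,
          fun (a₁ : Fin A₁) (x₁ : Fin X₁) =>
            if (a₁ : ℕ) < A₁ - 1 then ∑ a₂, p a₁ a₂ x₁ ⟨0, hX₂⟩ else 0,
          fun (a₂ : Fin A₂) (x₂ : Fin X₂) =>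
            if (a₂ : ℕ) < A₂ - 1 then ∑ a₁, p a₁ a₂ ⟨0, hX₁⟩ x₂ else 0))
      {p | (∀ x₁ x₂, ∑ a₁, ∑ a₂, p a₁ a₂ x₁ x₂ = 1) ∧
           (∀ a₁ x₁ x₂ x₂', ∑ a₂, p a₁ a₂ x₁ x₂ = ∑ a₂, p a₁ a₂ x₁ x₂') ∧
           (∀ a₂ x₂ x₁ x₁', ∑ a₁, p a₁ a₂ x₁ x₂ = ∑ a₁, p a₁ a₂ x₁' x₂)} := by
  rintro p ⟨hp_norm, hp_ns₁, hp_ns₂⟩ q ⟨hq_norm, hq_ns₁, hq_ns₂⟩ heq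
  simp only [Prod.mk.injEq, funext_iff] at heq
  obtain ⟨hjoint, hmarg₁, hmarg₂⟩ := heq
  suffices h : ∀ x₁ x₂, (fun a₁ a₂ => p a₁ a₂ x₁ x₂) = fun a₁ a₂ => q a₁ a₂ x₁ x₂ from
    funext fun a₁ => funext fun a₂ => funext fun x₁ => funext fun x₂ =>
      congr_fun₂ (h x₁ x₂) a₁ a₂
  intro x₁ x₂
  refine Fin.eq_of_sum_eq_of_marginals_eq ((hp_norm x₁ x₂).trans (hq_norm x₁ x₂).symm)
    (fun a₁ ha₁ => ?_) (fun a₂ ha₂ => ?_) (fun a₁ a₂ ha₁ ha₂ => ?_)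
  · rw [hp_ns₁ a₁ x₁ x₂ ⟨0, hX₂⟩, hq_ns₁ a₁ x₁ x₂ ⟨0, hX₂⟩]
    simpa [ha₁] using hmarg₁ a₁ x₁
  · rw [hp_ns₂ a₂ x₂ x₁ ⟨0, hX₁⟩, hq_ns₂ a₂ x₂ x₁ ⟨0, hX₁⟩]
    simpa [ha₂] using hmarg₂ a₂ x₂
  · simpa [ha₁, ha₂] using hjoint a₁ a₂ x₁ x₂
end
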